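/- arXiv:1109.0326 — 10 statements merged into one kernel-verified Lean document; each statement's English description precedes it below -/
import Mathlib

section
/- Let n ≥ 1 be an integer, let a < b be real numbers, let p be a real polynomial of degree n with leading coefficient 1/n!, and let f : [a,b] → ℝ be such that f^{(n-1)} is absolutely continuous on [a,b]. Then ∫_a^b f(x) dx = I_{(a,b)}(p,f) + E_{(a,b)}(p,f). -/
open MeasureTheory intervalIntegral Finset

/-- The `n`-th Bernoulli polynomial, evaluated at a real number `x`. -/
noncomputable def bernPoly (n : ℕ) (x : ℝ) : ℝ :=
  Polynomial.aeval x (Polynomial.bernoulli n)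

/-- The integration scheme `I_{(a,b)}(p, f)` generated by a degree `n` polynomial `p`,
where the derivatives of `f` are taken within `[a,b]`:
`I_{(a,b)}(p,f) = Σ_{j=1}^{n} (-1)^{j-1} (b-a)^j (p^{(n-j)}(1) f^{(j-1)}(b) − p^{(n-j)}(0) f^{(j-1)}(a))`. -/
noncomputable def schemeI (a b : ℝ) (n : ℕ) (p : Polynomial ℝ) (f : ℝ → ℝ) : ℝ :=
  ∑ j ∈ Finset.Icc 1 n, (-1 : ℝ) ^ (j - 1) * (b - a) ^ j *
    ((Polynomial.derivative^[n - j] p).eval (1 : ℝ) *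
        iteratedDerivWithin (j - 1) f (Set.Icc a b) b -
      (Polynomial.derivative^[n - j] p).eval (0 : ℝ) *
        iteratedDerivWithin (j - 1) f (Set.Icc a b) a)

/-- The error term `E_{(a,b)}(p,f) = (-1)^n (b-a)^{n+1} ∫_0^1 p(x) f^{(n)}(a+(b-a)x) dx`,
where `p : ℝ → ℝ` plays the role of the polynomial and `fn : ℝ → ℝ` that of the `n`-th
derivative of `f`. -/
noncomputable def errE (a b : ℝ) (n : ℕ) (p : ℝ → ℝ) (fn : ℝ → ℝ) : ℝ :=
  (-1 : ℝ) ^ n * (b - a) ^ (n + 1) * ∫ x in (0:ℝ)..1, p x * fn (a + (b - a) * x)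

/-- `g` is absolutely continuous on `[a,b]` with a.e. derivative (the integrable function) `g'`:
`g x = g a + ∫_a^x g'` for all `x ∈ [a,b]`. -/
def ACOn (g g' : ℝ → ℝ) (a b : ℝ) : Prop :=
  IntervalIntegrable g' volume a b ∧
    ∀ x ∈ Set.Icc a b, g x = g a + ∫ t in a..x, g' t

/-! Degree `n` and leading coefficient `1/n!` mean exactly `p⁽ⁿ⁾ = 1`. Starting from
`∫ f = ∫ p⁽ⁿ⁾((t - a) / (b - a)) f(t) dt`, integrate by parts `n` times against the rescaled
polynomials `t ↦ p⁽ⁿ⁻ᵏ⁾((t - a) / (b - a))`: each integration by parts produces one boundary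
term of the scheme and moves one derivative from the polynomial onto `f`. The last step only
needs `f⁽ⁿ⁻¹⁾` to be absolutely continuous, which is where integration by parts for absolutely
continuous functions enters. -/

namespace Polynomial

theorem iterate_derivative_natDegree {R : Type*} [CommSemiring R] (p : R[X]) :
    derivative^[p.natDegree] p = C ((p.natDegree.factorial : R) * p.leadingCoeff) := by
  rw [eq_C_of_natDegree_le_zero ((natDegree_iterate_derivative p _).trans (Nat.sub_self _).le),
    coeff_iterate_derivative, zero_add, Nat.descFactorial_self, nsmul_eq_mul]
  rfl

theorem hasDerivAt_eval_sub_div (q : ℝ[X]) (a c x : ℝ) :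
    HasDerivAt (fun t => q.eval ((t - a) / c)) ((derivative q).eval ((x - a) / c) / c) x := by
  simpa [div_eq_mul_inv, Function.comp_def] using
    (q.hasDerivAt ((x - a) / c)).comp x (((hasDerivAt_id x).sub_const a).div_const c)

end Polynomial

open Polynomial

theorem ContDiffOn.acOn_derivWithin {g : ℝ → ℝ} {a b : ℝ}
    (hg : ContDiffOn ℝ 1 g (Set.Icc a b)) (hab : a < b) :
    ACOn g (derivWithin g (Set.Icc a b)) a b := by
  have hint : IntervalIntegrable (derivWithin g (Set.Icc a b)) volume a b :=
    (hg.continuousOn_derivWithin (uniqueDiffOn_Icc hab) le_rfl).intervalIntegrable_of_Icc hab.le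
  refine ⟨hint, fun x hx => ?_⟩
  have hderiv : ∀ t ∈ Set.Ioo a b, HasDerivAt g (derivWithin g (Set.Icc a b) t) t := by
    intro t ht
    have hnhds := Icc_mem_nhds ht.1 ht.2
    rw [derivWithin_of_mem_nhds hnhds]
    exact ((hg t (Set.Ioo_subset_Icc_self ht)).differentiableWithinAt one_ne_zero
        |>.differentiableAt hnhds).hasDerivAt
  rw [integral_eq_sub_of_hasDerivAt_of_le hx.1
    (hg.continuousOn.mono (Set.Icc_subset_Icc_right hx.2))
    (fun t ht => hderiv t ⟨ht.1, ht.2.trans_le hx.2⟩)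
    (hint.mono_set (Set.uIcc_subset_uIcc_left (Set.mem_uIcc_of_le hx.1 hx.2)))]
  ring

theorem ACOn.integral_deriv_mul_eq_sub_integral_mul_deriv {u u' v v' : ℝ → ℝ} {a b : ℝ}
    (hab : a ≤ b) (hu : ∀ x, HasDerivAt u (u' x) x) (hu' : Continuous u') (hv : ACOn v v' a b) :
    ∫ x in a..b, u' x * v x = u b * v b - u a * v a - ∫ x in a..b, u x * v' x := by
  set w := fun x => v a + ∫ t in a..x, v' t
  have hvw : Set.EqOn v w (Set.uIcc a b) := by
    rw [Set.uIcc_of_le hab]; exact hv.2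
  have hw : AbsolutelyContinuousOnInterval w a b :=
    (contDiffOn_const (𝕜 := ℝ) (n := 1) (c := v a) (s := Set.uIcc a b)
      |>.absolutelyContinuousOnInterval).add
      (hv.1.absolutelyContinuousOnInterval_intervalIntegral Set.left_mem_uIcc)
  have hderiv_u : deriv u = u' := funext fun x => (hu x).deriv
  have hu_ac : AbsolutelyContinuousOnInterval u a b :=
    (contDiff_one_iff_deriv.2 ⟨fun x => (hu x).differentiableAt, hderiv_u ▸ hu'⟩).contDiffOn
      |>.absolutelyContinuousOnInterval
  have hderiv_w : ∀ᵐ x, x ∈ Set.uIoc a b → deriv w x = v' x := by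
    filter_upwards [hv.1.ae_hasDerivAt_integral] with x hx hxI
    exact ((hx (Set.uIoc_subset_uIcc hxI) a Set.left_mem_uIcc).const_add (v a)).deriv
  have ibp := hw.integral_mul_deriv_eq_deriv_mul hu_ac
  rw [hderiv_u] at ibp
  rw [intervalIntegral.integral_congr (fun x hx => by rw [hvw hx]), hvw Set.left_mem_uIcc,
    hvw Set.right_mem_uIcc]
  have hrest : ∫ x in a..b, deriv w x * u x = ∫ x in a..b, u x * v' x :=
    intervalIntegral.integral_congr_ae (by
      filter_upwards [hderiv_w] with x hx hxI
      rw [hx hxI, mul_comm])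
  simp only [mul_comm (u' _), mul_comm (u _) (w _)] at ibp ⊢
  rw [ibp, hrest]

theorem integral_unitInterval_mul_comp_affine (h g : ℝ → ℝ) {a b : ℝ} (hab : a ≠ b) :
    ∫ x in (0 : ℝ)..1, h x * g (a + (b - a) * x) =
      (b - a)⁻¹ * ∫ t in a..b, h ((t - a) / (b - a)) * g t := by
  have hc : b - a ≠ 0 := sub_ne_zero.2 hab.symm
  have := intervalIntegral.integral_comp_add_mul (a := 0) (b := 1)
    (fun t => h ((t - a) / (b - a)) * g t) hc a
  simpa [mul_div_cancel_left₀ _ hc] using this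

theorem errE_derivative {a b : ℝ} (hab : a < b) (k : ℕ) (q : ℝ[X]) {v v' : ℝ → ℝ}
    (hv : ACOn v v' a b) :
    errE a b k (fun x => (derivative q).eval x) v =
      (-1) ^ k * (b - a) ^ (k + 1) * (q.eval 1 * v b - q.eval 0 * v a) +
        errE a b (k + 1) (fun x => q.eval x) v' := by
  have hc : b - a ≠ 0 := sub_ne_zero.2 hab.ne'
  have ibp := hv.integral_deriv_mul_eq_sub_integral_mul_deriv hab.le
    (q.hasDerivAt_eval_sub_div a (b - a))
    ((derivative q).continuous.comp ((continuous_id.sub continuous_const).div_const _)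
      |>.div_const _)
  rw [sub_self, zero_div, div_self hc] at ibp
  have hscale : ∫ t in a..b, (derivative q).eval ((t - a) / (b - a)) / (b - a) * v t =
      (b - a)⁻¹ * ∫ t in a..b, (derivative q).eval ((t - a) / (b - a)) * v t := by
    rw [← intervalIntegral.integral_const_mul]
    congr 1 with t
    ring
  simp only [errE, integral_unitInterval_mul_comp_affine _ _ hab.ne]
  rw [← hscale, ibp]
  field_simp
  ring

theorem schemeI_succ (a b : ℝ) (k : ℕ) (q : ℝ[X]) (f : ℝ → ℝ) :
    schemeI a b (k + 1) q f = schemeI a b k (derivative q) f +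
      (-1) ^ k * (b - a) ^ (k + 1) *
        (q.eval 1 * iteratedDerivWithin k f (Set.Icc a b) b -
          q.eval 0 * iteratedDerivWithin k f (Set.Icc a b) a) := by
  rw [schemeI, Finset.sum_Icc_succ_top (by omega), schemeI]
  congr 1
  · refine Finset.sum_congr rfl fun j hj => ?_
    rw [Finset.mem_Icc] at hj
    rw [show k + 1 - j = k - j + 1 by omega, Function.iterate_succ_apply]
  · simp

theorem integral_eq_schemeI_add_errE {a b : ℝ} (hab : a < b) (f : ℝ → ℝ) (k : ℕ) (q : ℝ[X])
    (hq : derivative^[k] q = 1)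
    (hf : ∀ i < k, ACOn (iteratedDerivWithin i f (Set.Icc a b))
      (iteratedDerivWithin (i + 1) f (Set.Icc a b)) a b) :
    ∫ x in a..b, f x =
      schemeI a b k q f +
        errE a b k (fun x => q.eval x) (iteratedDerivWithin k f (Set.Icc a b)) := by
  induction k generalizing q with
  | zero =>
    rw [Function.iterate_zero_apply] at hq
    subst hq
    simp [schemeI, errE, (sub_pos.2 hab).ne']
  | succ k ih =>
    rw [ih (derivative q) (by rwa [← Function.iterate_succ_apply]) fun i hi => hf i (by omega),
      errE_derivative hab k q (hf k k.lt_succ_self), schemeI_succ]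
    ring

theorem ContDiffOn.acOn_iteratedDerivWithin {f : ℝ → ℝ} {a b : ℝ} {m i : ℕ} (hab : a < b)
    (hf : ContDiffOn ℝ m f (Set.Icc a b)) (hi : i < m) :
    ACOn (iteratedDerivWithin i f (Set.Icc a b))
      (iteratedDerivWithin (i + 1) f (Set.Icc a b)) a b := by
  have hC1 := ((contDiffOn_nat_succ_iff_contDiffOn_one_iteratedDerivWithin
    (uniqueDiffOn_Icc hab)).1 (hf.of_le (by exact_mod_cast hi))).2
  rw [iteratedDerivWithin_succ]
  exact hC1.acOn_derivWithin hab

theorem quadrature_formula_general (n : ℕ) (a b : ℝ) (hab : a < b)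
    (p : Polynomial ℝ) (hdeg : p.natDegree = n)
    (hlead : p.leadingCoeff = 1 / (n.factorial : ℝ))
    (f : ℝ → ℝ) (hreg : ContDiffOn ℝ (n - 1 : ℕ) f (Set.Icc a b))
    (hAC : ACOn (iteratedDerivWithin (n - 1) f (Set.Icc a b))
      (iteratedDerivWithin n f (Set.Icc a b)) a b) :
    ∫ x in a..b, f x =
      schemeI a b n p f +
        errE a b n (fun x => p.eval x) (iteratedDerivWithin n f (Set.Icc a b)) := by
  have hp : derivative^[n] p = 1 := by
    rw [← hdeg, iterate_derivative_natDegree, hlead, hdeg,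
      mul_one_div_cancel (by exact_mod_cast n.factorial_ne_zero), C_1]
  refine integral_eq_schemeI_add_errE hab f n p hp fun i hi => ?_
  rcases Nat.lt_or_ge i (n - 1) with hlt | hge
  · exact hreg.acOn_iteratedDerivWithin hab hlt
  · obtain rfl : i = n - 1 := by omega
    rwa [Nat.sub_add_cancel (by omega)]

/-- For `n ≥ 1`, `a < b`, a real polynomial `p` of degree `n` with leading
coefficient `1/n!`, and `f : [a,b] → ℝ` whose derivative `f^{(n-1)}` is absolutely continuous
on `[a,b]`, one has `∫_a^b f(x) dx = I_{(a,b)}(p,f) + E_{(a,b)}(p,f)`. -/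
theorem quadrature_formula (n : ℕ) (hn : 1 ≤ n) (a b : ℝ) (hab : a < b)
    (p : Polynomial ℝ) (hdeg : p.natDegree = n)
    (hlead : p.leadingCoeff = 1 / (n.factorial : ℝ))
    (f : ℝ → ℝ) (hreg : ContDiffOn ℝ (n - 1 : ℕ) f (Set.Icc a b))
    (hAC : ACOn (iteratedDerivWithin (n - 1) f (Set.Icc a b))
      (iteratedDerivWithin n f (Set.Icc a b)) a b) :
    ∫ x in a..b, f x =
      schemeI a b n p f +
        errE a b n (fun x => p.eval x) (iteratedDerivWithin n f (Set.Icc a b)) :=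
  quadrature_formula_general n a b hab p hdeg hlead f hreg hAC
end

section
/- Let n ≥ 2 be an integer and let p be a real polynomial of degree n with leading coefficient 1/n!. Then p is a telescoping polynomial, i.e. p^{(ℓ)}(0) = p^{(ℓ)}(1) for all 0 ≤ ℓ ≤ n−2, if and only if there is a constant c ∈ ℝ such that p(x) = B_n(x)/n! + c for all x. -/
/-!
Telescoping polynomials (up to a fixed order of derivatives) form a linear space containing the
constants. Since `B_n^{(ℓ)}` is a multiple of `B_{n-ℓ}` and `B_m(0) = B_m(1)` for `m ≠ 1`, the
polynomial `B_n / n!` is telescoping. If `p` has degree `n` and leading coefficient `1/n!`, then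
`p - B_n / n!` is telescoping of degree `m < n`; were `m ≥ 1`, its `(m-1)`-st derivative would be
a nonconstant affine function taking the same value at `0` and `1`, which is absurd.
-/

open Polynomial

namespace Polynomial

variable {R : Type*}

theorem iterate_derivative_bernoulli (n k : ℕ) :
    derivative^[k] (bernoulli n) = (n.descFactorial k : ℚ[X]) * bernoulli (n - k) := by
  induction k with
  | zero => simp
  | succ k ih =>
    rw [Function.iterate_succ_apply', ih, derivative_natCast_mul, derivative_bernoulli,
      Nat.descFactorial_succ, Nat.sub_sub]
    push_cast
    ring

theorem bernoulli_eval_zero_eq_eval_one {n : ℕ} (hn : n ≠ 1) :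
    (bernoulli n).eval 0 = (bernoulli n).eval 1 := by
  rw [bernoulli_eval_zero, bernoulli_eval_one, bernoulli_eq_bernoulli'_of_ne_one hn]

theorem eval_one_sub_eval_zero_of_natDegree_le_one [Ring R] {p : R[X]} (hp : p.natDegree ≤ 1) :
    p.eval 1 - p.eval 0 = p.coeff 1 := by
  rw [eq_X_add_C_of_natDegree_le_one hp]
  simp

theorem natDegree_sub_C_leadingCoeff_mul_bernoulli_map_le [Ring R] [Algebra ℚ R] (p : R[X]) :
    (p - C p.leadingCoeff * (bernoulli p.natDegree).map (algebraMap ℚ R)).natDegree ≤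
      p.natDegree - 1 := by
  refine natDegree_le_iff_coeff_eq_zero.mpr fun N hN => ?_
  rw [coeff_sub, coeff_C_mul, coeff_map, coeff_bernoulli]
  rcases (show p.natDegree ≤ N by omega).eq_or_lt with rfl | hlt
  · simp [coeff_natDegree]
  · simp [coeff_eq_zero_of_natDegree_lt hlt, hlt.not_ge]

def IsTelescoping [Semiring R] (k : ℕ) (p : R[X]) : Prop :=
  ∀ ℓ ≤ k, (derivative^[ℓ] p).eval 0 = (derivative^[ℓ] p).eval 1

theorem isTelescoping_C [Semiring R] (k : ℕ) (a : R) : IsTelescoping k (C a) := by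
  rintro (_ | ℓ) -
  · simp
  · simp [iterate_derivative_C]

theorem isTelescoping_bernoulli_map [Semiring R] [Algebra ℚ R] {n k : ℕ} (hn : n ≠ 1)
    (hk : k ≤ n - 2) : IsTelescoping k ((bernoulli n).map (algebraMap ℚ R)) := fun ℓ hℓ => by
  rw [iterate_derivative_map, eval_zero_map, eval_one_map, iterate_derivative_bernoulli]
  simp only [eval_mul, eval_natCast, bernoulli_eval_zero_eq_eval_one (show n - ℓ ≠ 1 by omega)]

namespace IsTelescoping

variable {k : ℕ}

theorem add [Semiring R] {p q : R[X]} (hp : IsTelescoping k p) (hq : IsTelescoping k q) :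
    IsTelescoping k (p + q) := fun ℓ hℓ => by
  simp only [iterate_map_add, eval_add, hp ℓ hℓ, hq ℓ hℓ]

theorem sub [Ring R] {p q : R[X]} (hp : IsTelescoping k p) (hq : IsTelescoping k q) :
    IsTelescoping k (p - q) := fun ℓ hℓ => by
  simp only [iterate_derivative_sub, eval_sub, hp ℓ hℓ, hq ℓ hℓ]

theorem C_mul [Semiring R] {p : R[X]} (a : R) (hp : IsTelescoping k p) :
    IsTelescoping k (C a * p) :=
  fun ℓ hℓ => by simp only [iterate_derivative_C_mul, eval_C_mul, hp ℓ hℓ]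

theorem eq_C_of_natDegree_le [Ring R] [NoZeroSMulDivisors ℕ R] {p : R[X]}
    (hp : IsTelescoping k p) (hdeg : p.natDegree ≤ k + 1) : p = C (p.coeff 0) := by
  refine eq_C_of_natDegree_le_zero (Nat.le_zero.mpr ?_)
  by_contra hm
  set m := p.natDegree
  have hslope : (derivative^[m - 1] p).coeff 1 ≠ 0 := by
    rw [coeff_iterate_derivative, Nat.add_sub_cancel' (by omega)]
    refine smul_ne_zero (by simp [Nat.descFactorial_eq_zero_iff_lt]) ?_
    exact leadingCoeff_ne_zero.mpr (ne_zero_of_natDegree_gt (Nat.pos_of_ne_zero hm))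
  have hlin : (derivative^[m - 1] p).natDegree ≤ 1 :=
    (natDegree_iterate_derivative p _).trans (by omega)
  apply hslope
  rw [← eval_one_sub_eval_zero_of_natDegree_le_one hlin, hp (m - 1) (by omega), sub_self]

end IsTelescoping

end Polynomial

theorem bernPoly_eq_eval_map (n : ℕ) (x : ℝ) :
    bernPoly n x = ((Polynomial.bernoulli n).map (algebraMap ℚ ℝ)).eval x := by
  rw [bernPoly, eval_map_algebraMap]

/-- Let `n ≥ 2` and let `p` be a real polynomial of degree `n` with leading
coefficient `1/n!`. Then `p` is telescoping, i.e. `p^{(ℓ)}(0) = p^{(ℓ)}(1)` for all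
`0 ≤ ℓ ≤ n − 2`, if and only if there is a constant `c` with `p(x) = B_n(x)/n! + c`. -/
theorem telescoping_iff_bernoulli (n : ℕ) (hn : 2 ≤ n)
    (p : Polynomial ℝ) (hdeg : p.natDegree = n)
    (hlead : p.leadingCoeff = 1 / (n.factorial : ℝ)) :
    (∀ ℓ : ℕ, ℓ ≤ n - 2 →
        (Polynomial.derivative^[ℓ] p).eval (0 : ℝ) =
          (Polynomial.derivative^[ℓ] p).eval (1 : ℝ)) ↔
      ∃ c : ℝ, ∀ x : ℝ, p.eval x = bernPoly n x / (n.factorial : ℝ) + c := by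
  set B := (Polynomial.bernoulli n).map (algebraMap ℚ ℝ)
  have hB : IsTelescoping (n - 2) B := isTelescoping_bernoulli_map (by omega) le_rfl
  have hform (c : ℝ) : (∀ x, p.eval x = bernPoly n x / n.factorial + c) ↔
      p = C (1 / n.factorial : ℝ) * B + C c := by
    have heval (x : ℝ) :
        (C (1 / n.factorial : ℝ) * B + C c).eval x = bernPoly n x / n.factorial + c := by
      rw [eval_add, eval_C_mul, eval_C, bernPoly_eq_eval_map, one_div_mul_eq_div]
    exact ⟨fun h => funext fun x => (h x).trans (heval x).symm, by rintro rfl; exact heval⟩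
  simp only [hform]
  change IsTelescoping (n - 2) p ↔ _
  constructor
  · intro hp
    have hdeg' : (p - C (1 / n.factorial : ℝ) * B).natDegree ≤ n - 2 + 1 := by
      have hlow := natDegree_sub_C_leadingCoeff_mul_bernoulli_map_le p
      rw [hdeg, hlead] at hlow
      exact hlow.trans (by omega)
    exact ⟨_, sub_eq_iff_eq_add'.mp ((hp.sub (hB.C_mul _)).eq_C_of_natDegree_le hdeg')⟩
  · rintro ⟨c, rfl⟩
    exact (hB.C_mul _).add (isTelescoping_C _ _)
end

section
/- Let n ≥ 1 be an odd integer and let 1 ≤ r < ∞. Then for every constant c ∈ ℝ, ‖p_n‖_r ≤ ‖p_n + c‖_r; moreover the inequality is strict for nonzero c when r > 1. -/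
open MeasureTheory intervalIntegral

/-- `p_n(x) = B_n(x)/n!`. -/
noncomputable def pB (n : ℕ) (x : ℝ) : ℝ := bernPoly n x / (n.factorial : ℝ)

/-- The `L^r([0,1])` norm of `g`, `‖g‖_r = (∫_0^1 |g(x)|^r dx)^{1/r}`, for `1 ≤ r < ∞`. -/
noncomputable def normR (r : ℝ) (g : ℝ → ℝ) : ℝ :=
  (∫ x in (0:ℝ)..1, |g x| ^ r) ^ (1 / r)

/-! For odd `n` the polynomial `p_n` is antisymmetric about `1/2`: `p_n (1 - x) = -p_n x`.
Hence `x ↦ 1 - x` turns `∫₀¹ |p_n + c|^r` into `∫₀¹ |p_n - c|^r`, so `∫₀¹ |p_n + c|^r` is the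
integral of the average `(|p_n + c|^r + |p_n - c|^r) / 2`, which dominates `|p_n|^r` pointwise by
convexity of `t ↦ |t|^r`, strictly so when `r > 1` and `c ≠ 0`. -/

section Midpoint

variable {r : ℝ}

lemma abs_le_add_abs_add_abs_sub_div_two (a c : ℝ) : |a| ≤ (|a + c| + |a - c|) / 2 := by
  have h := abs_add_le (a + c) (a - c)
  rw [show a + c + (a - c) = 2 * a by ring, abs_mul, abs_two] at h
  linarith

lemma abs_rpow_le_midpoint (hr : 1 ≤ r) (a c : ℝ) :
    |a| ^ r ≤ (|a + c| ^ r + |a - c| ^ r) / 2 := by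
  have hconv := (convexOn_rpow hr).2 (Set.mem_Ici.2 (abs_nonneg (a + c)))
    (Set.mem_Ici.2 (abs_nonneg (a - c))) (by norm_num : (0 : ℝ) ≤ 1 / 2)
    (by norm_num : (0 : ℝ) ≤ 1 / 2) (by norm_num)
  simp only [smul_eq_mul] at hconv
  calc |a| ^ r ≤ ((|a + c| + |a - c|) / 2) ^ r :=
        Real.rpow_le_rpow (abs_nonneg a) (abs_le_add_abs_add_abs_sub_div_two a c) (by linarith)
    _ = (1 / 2 * |a + c| + 1 / 2 * |a - c|) ^ r := by ring_nf
    _ ≤ 1 / 2 * |a + c| ^ r + 1 / 2 * |a - c| ^ r := hconv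
    _ = (|a + c| ^ r + |a - c| ^ r) / 2 := by ring

lemma abs_rpow_lt_midpoint (hr : 1 < r) (a : ℝ) {c : ℝ} (hc : c ≠ 0) :
    |a| ^ r < (|a + c| ^ r + |a - c| ^ r) / 2 := by
  by_cases heq : |a + c| = |a - c|
  · have ha : a = 0 := by
      rcases abs_eq_abs.1 heq with h | h
      · exact absurd (by linarith : c = 0) hc
      · linarith
    have hpos : 0 < |c| ^ r := Real.rpow_pos_of_pos (abs_pos.2 hc) r
    subst ha
    rw [abs_zero, Real.zero_rpow (by linarith), zero_add, zero_sub, abs_neg]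
    linarith
  · have hconv := (strictConvexOn_rpow hr).2 (Set.mem_Ici.2 (abs_nonneg (a + c)))
      (Set.mem_Ici.2 (abs_nonneg (a - c))) heq (by norm_num : (0 : ℝ) < 1 / 2)
      (by norm_num : (0 : ℝ) < 1 / 2) (by norm_num)
    simp only [smul_eq_mul] at hconv
    calc |a| ^ r ≤ ((|a + c| + |a - c|) / 2) ^ r :=
          Real.rpow_le_rpow (abs_nonneg a) (abs_le_add_abs_add_abs_sub_div_two a c) (by linarith)
      _ = (1 / 2 * |a + c| + 1 / 2 * |a - c|) ^ r := by ring_nf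
      _ < 1 / 2 * |a + c| ^ r + 1 / 2 * |a - c| ^ r := hconv
      _ = (|a + c| ^ r + |a - c| ^ r) / 2 := by ring

end Midpoint

section Antisymmetric

variable {g : ℝ → ℝ} {r : ℝ}

lemma continuous_abs_add_rpow (hg : Continuous g) (hr : 0 ≤ r) (c : ℝ) :
    Continuous fun x => |g x + c| ^ r :=
  ((hg.add continuous_const).abs).rpow_const fun _ => Or.inr hr

lemma integral_abs_sub_rpow_eq_of_antisymm (hsymm : ∀ x, g (1 - x) = -g x) (c : ℝ) :
    ∫ x in (0 : ℝ)..1, |g x - c| ^ r = ∫ x in (0 : ℝ)..1, |g x + c| ^ r := by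
  have hrefl := intervalIntegral.integral_comp_sub_left (a := 0) (b := 1) (fun x => |g x + c| ^ r) 1
  simp only [sub_self, sub_zero, hsymm] at hrefl
  rw [← hrefl]
  congr 1 with x
  rw [show -g x + c = -(g x - c) by ring, abs_neg]

lemma integral_abs_rpow_midpoint_eq_of_antisymm (hg : Continuous g) (hsymm : ∀ x, g (1 - x) = -g x)
    (hr : 0 ≤ r) (c : ℝ) :
    ∫ x in (0 : ℝ)..1, (|g x + c| ^ r + |g x - c| ^ r) / 2 = ∫ x in (0 : ℝ)..1, |g x + c| ^ r := by
  have hsub : Continuous fun x => |g x - c| ^ r := by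
    simpa only [sub_eq_add_neg] using continuous_abs_add_rpow hg hr (-c)
  rw [intervalIntegral.integral_div,
    intervalIntegral.integral_add ((continuous_abs_add_rpow hg hr c).intervalIntegrable 0 1)
      (hsub.intervalIntegrable 0 1),
    integral_abs_sub_rpow_eq_of_antisymm hsymm]
  ring

lemma continuous_abs_rpow_midpoint (hg : Continuous g) (hr : 0 ≤ r) (c : ℝ) :
    Continuous fun x => (|g x + c| ^ r + |g x - c| ^ r) / 2 := by
  simp only [sub_eq_add_neg]
  exact ((continuous_abs_add_rpow hg hr c).add (continuous_abs_add_rpow hg hr (-c))).div_const 2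

lemma integral_abs_rpow_le_of_antisymm (hg : Continuous g) (hsymm : ∀ x, g (1 - x) = -g x)
    (hr : 1 ≤ r) (c : ℝ) :
    ∫ x in (0 : ℝ)..1, |g x| ^ r ≤ ∫ x in (0 : ℝ)..1, |g x + c| ^ r := by
  have hr0 : 0 ≤ r := by linarith
  rw [← integral_abs_rpow_midpoint_eq_of_antisymm hg hsymm hr0]
  refine intervalIntegral.integral_mono_on zero_le_one ?_
    ((continuous_abs_rpow_midpoint hg hr0 c).intervalIntegrable 0 1) fun x _ => abs_rpow_le_midpoint hr _ c
  simpa only [add_zero] using (continuous_abs_add_rpow hg hr0 0).intervalIntegrable 0 1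

lemma integral_abs_rpow_lt_of_antisymm (hg : Continuous g) (hsymm : ∀ x, g (1 - x) = -g x)
    (hr : 1 < r) {c : ℝ} (hc : c ≠ 0) :
    ∫ x in (0 : ℝ)..1, |g x| ^ r < ∫ x in (0 : ℝ)..1, |g x + c| ^ r := by
  have hr0 : 0 ≤ r := by linarith
  rw [← integral_abs_rpow_midpoint_eq_of_antisymm hg hsymm hr0]
  refine intervalIntegral.integral_lt_integral_of_continuousOn_of_le_of_exists_lt zero_lt_one
    ?_ (continuous_abs_rpow_midpoint hg hr0 c).continuousOn
    (fun x _ => (abs_rpow_lt_midpoint hr _ hc).le) ⟨0, by simp, abs_rpow_lt_midpoint hr _ hc⟩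
  simpa only [add_zero] using (continuous_abs_add_rpow hg hr0 0).continuousOn

end Antisymmetric

lemma integral_abs_rpow_nonneg (f : ℝ → ℝ) (r : ℝ) : 0 ≤ ∫ x in (0 : ℝ)..1, |f x| ^ r :=
  intervalIntegral.integral_nonneg zero_le_one fun _ _ => Real.rpow_nonneg (abs_nonneg _) r

section NormR

variable {r : ℝ} {f g : ℝ → ℝ}

lemma normR_le_normR (hr : 0 < r)
    (h : ∫ x in (0 : ℝ)..1, |f x| ^ r ≤ ∫ x in (0 : ℝ)..1, |g x| ^ r) : normR r f ≤ normR r g :=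
  Real.rpow_le_rpow (integral_abs_rpow_nonneg f r) h (by positivity)

lemma normR_lt_normR (hr : 0 < r)
    (h : ∫ x in (0 : ℝ)..1, |f x| ^ r < ∫ x in (0 : ℝ)..1, |g x| ^ r) : normR r f < normR r g :=
  Real.rpow_lt_rpow (integral_abs_rpow_nonneg f r) h (by positivity)

end NormR

lemma continuous_pB (n : ℕ) : Continuous (pB n) :=
  (Polynomial.continuous_aeval _).div_const _

lemma pB_one_sub_of_odd {n : ℕ} (hodd : Odd n) (x : ℝ) : pB n (1 - x) = -pB n x := by
  have h := congrArg (Polynomial.aeval x) (Polynomial.bernoulli_comp_one_sub_X n)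
  simp only [Polynomial.aeval_comp, map_mul, map_neg, map_one, map_sub,
    Polynomial.aeval_X, hodd.neg_one_pow] at h
  simp only [pB, bernPoly, h]
  ring

theorem Lr_norm_pB_odd_min_general (n : ℕ) (hodd : Odd n) (r : ℝ) (hr : 1 ≤ r)
    (c : ℝ) :
    normR r (pB n) ≤ normR r (fun x => pB n x + c) ∧
      (1 < r → c ≠ 0 → normR r (pB n) < normR r (fun x => pB n x + c)) := by
  have hr0 : 0 < r := by linarith
  refine ⟨normR_le_normR hr0 ?_, fun hr1 hc => normR_lt_normR hr0 ?_⟩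
  · exact integral_abs_rpow_le_of_antisymm (continuous_pB n) (pB_one_sub_of_odd hodd) hr c
  · exact integral_abs_rpow_lt_of_antisymm (continuous_pB n) (pB_one_sub_of_odd hodd) hr1 hc

/-- For odd `n ≥ 1` and `1 ≤ r < ∞`: for every `c ∈ ℝ`,
`‖p_n‖_r ≤ ‖p_n + c‖_r`, and the inequality is strict for nonzero `c` when `r > 1`. -/
theorem Lr_norm_pB_odd_min (n : ℕ) (hn : 1 ≤ n) (hodd : Odd n) (r : ℝ) (hr : 1 ≤ r)
    (c : ℝ) :
    normR r (pB n) ≤ normR r (fun x => pB n x + c) ∧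
      (1 < r → c ≠ 0 → normR r (pB n) < normR r (fun x => pB n x + c)) :=
  Lr_norm_pB_odd_min_general n hodd r hr c
end

section
/- Let n ≥ 1 be an integer, a < b real, N ≥ 1 an integer, p a real polynomial of degree n with leading coefficient 1/n!, and let 1 ≤ r, s ≤ ∞ with 1/r + 1/s = 1. If f : [a,b] → ℝ is such that f^{(n-1)} is absolutely continuous on [a,b] and f^{(n)} ∈ L^s([a,b]), then |E^N_{(a,b)}(p,f)| ≤ (b−a)^{n+1/r} N^{−n} ‖p‖_r ‖f^{(n)}‖_{L^s([a,b])}. -/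
open MeasureTheory intervalIntegral ENNReal Finset

/-- The composite error `E^N_{(a,b)}(p,f) = Σ_{k=0}^{N-1} E_{(a+kh, a+(k+1)h)}(p,f)`,
where `h = (b-a)/N`. -/
noncomputable def errEN (a b : ℝ) (N : ℕ) (n : ℕ) (p : ℝ → ℝ) (fn : ℝ → ℝ) : ℝ :=
  ∑ k ∈ Finset.range N,
    errE (a + k * ((b - a) / N)) (a + (k + 1) * ((b - a) / N)) n p fn

/-!
On a subinterval `[c, c + h]` the substitution `t = c + h x` scales the `L^s` norm on `[0, 1]`
by `h^(-1/s)`, so Hölder's inequality on `[0, 1]` gives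
`|E_{(c,c+h)}(p,f)| ≤ h^(n+1/r) ‖p‖_r ‖f^(n)‖_{L^s([c,c+h])}`.
Summing over the `N` subintervals, the power-mean inequality
`∑ₖ xₖ ≤ N^(1-1/s) (∑ₖ xₖ^s)^(1/s)` and additivity of `∫ |f^(n)|^s` bound the sum of the local
norms by `N^(1/r) ‖f^(n)‖_{L^s([a,b])}`, and `h^(n+1/r) N^(1/r) = (b-a)^(n+1/r) N^(-n)` for
`h = (b-a)/N`.
-/

open scoped NNReal

theorem ENNReal.HolderConjugate.one_div_toReal_add_one_div_toReal {r s : ℝ≥0∞}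
    [HolderConjugate r s] : 1 / r.toReal + 1 / s.toReal = 1 := by
  have h := HolderTriple.inv_add_inv_eq_inv r s 1
  rw [inv_one] at h
  have hr : r⁻¹ ≠ ∞ := ne_top_of_le_ne_top one_ne_top (h ▸ le_self_add)
  have hs : s⁻¹ ≠ ∞ := ne_top_of_le_ne_top one_ne_top (h ▸ le_add_self)
  rw [one_div, one_div, ← toReal_inv, ← toReal_inv, ← toReal_add hr hs, h, toReal_one]

theorem measurableEmbedding_const_add_mul (c : ℝ) {h : ℝ} (hh : h ≠ 0) :
    MeasurableEmbedding (fun x => c + h * x) :=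
  (measurableEmbedding_addLeft c).comp (measurableEmbedding_mulLeft₀ hh)

theorem map_const_add_mul_volume_restrict_Icc {c h : ℝ} (hh : 0 < h) :
    Measure.map (fun x => c + h * x) (volume.restrict (Set.Icc 0 1))
      = ENNReal.ofReal h⁻¹ • volume.restrict (Set.Icc c (c + h)) := by
  have hpre : (fun x => c + h * x) ⁻¹' Set.Icc c (c + h) = Set.Icc 0 1 := by
    ext x
    simp [hh]
  have hvol : Measure.map (fun x => c + h * x) volume = ENNReal.ofReal h⁻¹ • volume := by
    change Measure.map ((c + ·) ∘ (h * ·)) volume = _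
    rw [← Measure.map_map (measurable_const_add c) (measurable_const_mul h),
      Real.map_volume_mul_left hh.ne', Measure.map_smul, map_add_left_eq_self,
      abs_of_pos (inv_pos.2 hh)]
  rw [← hpre, ← (measurableEmbedding_const_add_mul c hh.ne').restrict_map, hvol,
    Measure.restrict_smul]

theorem eLpNorm_comp_const_add_mul {E : Type*} [NormedAddCommGroup E] (f : ℝ → E) (p : ℝ≥0∞)
    {c h : ℝ} (hh : 0 < h) :
    eLpNorm (fun x => f (c + h * x)) p (volume.restrict (Set.Icc 0 1)) =
      ENNReal.ofReal h⁻¹ ^ (1 / p.toReal) * eLpNorm f p (volume.restrict (Set.Icc c (c + h))) := by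
  rw [← Function.comp_def f, ← (measurableEmbedding_const_add_mul c hh.ne').eLpNorm_map_measure,
    map_const_add_mul_volume_restrict_Icc hh, eLpNorm_smul_measure_of_ne_zero (by simpa using hh),
    toReal_div, toReal_one, smul_eq_mul]

theorem enorm_intervalIntegral_le_eLpNorm_one {E : Type*} [NormedAddCommGroup E]
    [NormedSpace ℝ E] {a b : ℝ} (hab : a ≤ b) (g : ℝ → E) :
    ‖∫ x in a..b, g x‖ₑ ≤ eLpNorm g 1 (volume.restrict (Set.Icc a b)) := by
  rw [intervalIntegral.integral_of_le hab, ← integral_Icc_eq_integral_Ioc,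
    eLpNorm_one_eq_lintegral_enorm]
  exact enorm_integral_le_lintegral_enorm g

theorem enorm_errE_le {r s : ℝ≥0∞} [HolderConjugate r s] {p g : ℝ → ℝ} {c d : ℝ}
    (hp : AEStronglyMeasurable p (volume.restrict (Set.Icc 0 1)))
    (hg : AEStronglyMeasurable g (volume.restrict (Set.Icc c d))) (hcd : c < d) (n : ℕ) :
    ‖errE c d n p g‖ₑ ≤ ENNReal.ofReal ((d - c) ^ ((n : ℝ) + 1 / r.toReal)) *
      eLpNorm p r (volume.restrict (Set.Icc 0 1)) *
      eLpNorm g s (volume.restrict (Set.Icc c d)) := by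
  obtain ⟨h, hh, rfl⟩ : ∃ h, 0 < h ∧ d = c + h := ⟨d - c, sub_pos.2 hcd, by ring⟩
  rw [add_sub_cancel_left]
  have hg_affine : AEStronglyMeasurable (fun x => g (c + h * x)) (volume.restrict (Set.Icc 0 1)) :=
    (measurableEmbedding_const_add_mul c hh.ne').aestronglyMeasurable_map_iff.1
      (by rw [map_const_add_mul_volume_restrict_Icc hh]; exact hg.smul_measure _)
  have hscale : ENNReal.ofReal (h ^ (n + 1)) * ENNReal.ofReal h⁻¹ ^ (1 / s.toReal)
      = ENNReal.ofReal (h ^ ((n : ℝ) + 1 / r.toReal)) := by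
    rw [ENNReal.ofReal_rpow_of_pos (inv_pos.2 hh), ← ENNReal.ofReal_mul (by positivity),
      Real.inv_rpow hh.le, ← Real.rpow_neg hh.le, ← Real.rpow_natCast, ← Real.rpow_add hh]
    have := HolderConjugate.one_div_toReal_add_one_div_toReal (r := r) (s := s)
    congr 2
    push_cast
    linarith
  calc ‖errE c (c + h) n p g‖ₑ
      = ENNReal.ofReal (h ^ (n + 1)) * ‖∫ x in (0 : ℝ)..1, p x * g (c + h * x)‖ₑ := by
        rw [errE, add_sub_cancel_left, enorm_mul, enorm_mul, enorm_pow, enorm_neg, enorm_one,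
          one_pow, one_mul, Real.enorm_of_nonneg (by positivity)]
    _ ≤ ENNReal.ofReal (h ^ (n + 1)) *
          eLpNorm (p • fun x => g (c + h * x)) 1 (volume.restrict (Set.Icc 0 1)) :=
        mul_le_mul_right (enorm_intervalIntegral_le_eLpNorm_one zero_le_one _) _
    _ ≤ ENNReal.ofReal (h ^ (n + 1)) * (eLpNorm p r (volume.restrict (Set.Icc 0 1)) *
          eLpNorm (fun x => g (c + h * x)) s (volume.restrict (Set.Icc 0 1))) :=
        mul_le_mul_right (eLpNorm_smul_le_mul_eLpNorm hg_affine hp) _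
    _ = _ := by
        rw [eLpNorm_comp_const_add_mul g s hh, ← hscale]
        ring

theorem enorm_errEN_le {r s : ℝ≥0∞} [HolderConjugate r s] {p g : ℝ → ℝ} {a b : ℝ} {N : ℕ}
    (hp : AEStronglyMeasurable p (volume.restrict (Set.Icc 0 1)))
    (hg : AEStronglyMeasurable g (volume.restrict (Set.Icc a b))) (hab : a < b) (hN : 0 < N)
    (n : ℕ) :
    ‖errEN a b N n p g‖ₑ ≤ ENNReal.ofReal (((b - a) / N) ^ ((n : ℝ) + 1 / r.toReal)) *
      eLpNorm p r (volume.restrict (Set.Icc 0 1)) * ∑ k ∈ range N,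
        eLpNorm g s (volume.restrict
          (Set.Icc (a + k * ((b - a) / N)) (a + (k + 1) * ((b - a) / N)))) := by
  set h := (b - a) / N
  have hh : 0 < h := div_pos (sub_pos.2 hab) (by exact_mod_cast hN)
  rw [errEN, mul_sum]
  refine (enorm_sum_le _ _).trans (sum_le_sum fun k hk => ?_)
  have hk : (k : ℝ) + 1 ≤ N := by exact_mod_cast mem_range.1 hk
  have hsub : Set.Icc (a + k * h) (a + (k + 1) * h) ⊆ Set.Icc a b := by
    refine Set.Icc_subset_Icc (le_add_of_nonneg_right (by positivity)) ?_
    calc a + (k + 1) * h ≤ a + N * h := by gcongr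
      _ = b := by rw [mul_div_cancel₀ _ (by positivity)]; ring
  have hlen : a + (k + 1) * h - (a + k * h) = h := by ring
  simpa only [hlen] using enorm_errE_le (r := r) (s := s) hp
    (hg.mono_measure (Measure.restrict_mono hsub le_rfl)) (by linarith) n

/-- For `p = ∞` the exponent is `1`, since `(∞ : ℝ≥0∞).toReal = 0` and `1 / 0 = 0`. -/
theorem sum_eLpNorm_restrict_le {α ι E : Type*} [MeasurableSpace α] [NormedAddCommGroup E]
    {μ : Measure α} {f : α → E} {p : ℝ≥0∞} (hp : 1 ≤ p) {t : Finset ι} {A : ι → Set α}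
    (hA : (t : Set ι).PairwiseDisjoint A) (hAm : ∀ i ∈ t, MeasurableSet (A i)) :
    ∑ i ∈ t, eLpNorm f p (μ.restrict (A i))
      ≤ (#t : ℝ≥0∞) ^ (1 - 1 / p.toReal) * eLpNorm f p (μ.restrict (⋃ i ∈ t, A i)) := by
  obtain rfl | hp_top := eq_or_ne p ∞
  · calc ∑ i ∈ t, eLpNorm f ∞ (μ.restrict (A i))
        ≤ ∑ _i ∈ t, eLpNorm f ∞ (μ.restrict (⋃ i ∈ t, A i)) :=
          sum_le_sum fun i hi =>
            eLpNorm_mono_measure _ (Measure.restrict_mono (Set.subset_biUnion_of_mem hi) le_rfl)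
      _ = _ := by simp
  lift p to ℝ≥0 using hp_top
  have hp1 : (1 : ℝ) ≤ p := by exact_mod_cast hp
  have hp0 : p ≠ 0 := by rintro rfl; simp at hp
  have hpow (ν : Measure α) : eLpNorm f p ν ^ (p : ℝ) = ∫⁻ x, ‖f x‖ₑ ^ (p : ℝ) ∂ν :=
    eLpNorm_nnreal_pow_eq_lintegral hp0
  rw [← ENNReal.rpow_le_rpow_iff (z := p) (by positivity)]
  calc (∑ i ∈ t, eLpNorm f p (μ.restrict (A i))) ^ (p : ℝ)
      ≤ (#t : ℝ≥0∞) ^ ((p : ℝ) - 1) * ∑ i ∈ t, eLpNorm f p (μ.restrict (A i)) ^ (p : ℝ) :=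
        ENNReal.rpow_sum_le_const_mul_sum_rpow _ _ hp1
    _ = (#t : ℝ≥0∞) ^ ((p : ℝ) - 1) * eLpNorm f p (μ.restrict (⋃ i ∈ t, A i)) ^ (p : ℝ) := by
        simp_rw [hpow, lintegral_biUnion_finset hA hAm]
    _ = _ := by
        rw [ENNReal.mul_rpow_of_nonneg _ _ (by positivity), ← ENNReal.rpow_mul, coe_toReal]
        congr 2
        field_simp

theorem sum_eLpNorm_restrict_Icc_le {E : Type*} [NormedAddCommGroup E] (g : ℝ → E)
    {s : ℝ≥0∞} (hs : 1 ≤ s) (a : ℝ) {h : ℝ} (hh : 0 ≤ h) (N : ℕ) :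
    ∑ k ∈ range N, eLpNorm g s (volume.restrict (Set.Icc (a + k * h) (a + (k + 1) * h)))
      ≤ (N : ℝ≥0∞) ^ (1 - 1 / s.toReal) *
        eLpNorm g s (volume.restrict (Set.Icc a (a + N * h))) := by
  set x : ℕ → ℝ := fun k => a + k * h
  have hx : Monotone x := fun i j hij => by simp only [x]; gcongr
  have hunion : ⋃ k ∈ range N, Set.Ioc (x k) (x (Order.succ k)) ⊆ Set.Icc a (a + N * h) := by
    refine Set.iUnion₂_subset fun k hk => Set.Ioc_subset_Icc_self.trans ?_
    have hk : (k : ℝ) + 1 ≤ N := by exact_mod_cast mem_range.1 hk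
    refine Set.Icc_subset_Icc (le_add_of_nonneg_right (by positivity)) ?_
    simp only [x, Order.succ_eq_add_one, Nat.cast_add, Nat.cast_one]
    gcongr
  calc ∑ k ∈ range N, eLpNorm g s (volume.restrict (Set.Icc (a + k * h) (a + (k + 1) * h)))
      = ∑ k ∈ range N, eLpNorm g s (volume.restrict (Set.Ioc (x k) (x (Order.succ k)))) := by
        simp [x, Measure.restrict_congr_set Ioc_ae_eq_Icc]
    _ ≤ (N : ℝ≥0∞) ^ (1 - 1 / s.toReal) *
          eLpNorm g s (volume.restrict (⋃ k ∈ range N, Set.Ioc (x k) (x (Order.succ k)))) := by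
        refine (sum_eLpNorm_restrict_le hs (hx.pairwise_disjoint_on_Ioc_succ.set_pairwise _)
          fun _ _ => measurableSet_Ioc).trans_eq ?_
        rw [card_range]
    _ ≤ _ := by gcongr

theorem ENNReal.ofReal_div_natCast_rpow_mul_natCast_rpow {L : ℝ} (hL : 0 ≤ L) {N : ℕ}
    (hN : 0 < N) (n : ℕ) {ρ : ℝ} (hρ : 0 ≤ ρ) :
    ENNReal.ofReal ((L / N) ^ ((n : ℝ) + ρ)) * (N : ℝ≥0∞) ^ ρ
      = ENNReal.ofReal (L ^ ((n : ℝ) + ρ) / (N : ℝ) ^ n) := by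
  have hN' : (0 : ℝ) < N := by exact_mod_cast hN
  rw [← ENNReal.ofReal_natCast, ENNReal.ofReal_rpow_of_nonneg hN'.le hρ,
    ← ENNReal.ofReal_mul (by positivity), Real.div_rpow hL hN'.le, Real.rpow_add hN',
    Real.rpow_natCast]
  field_simp

theorem composite_holder_error_bound_general (n : ℕ) (a b : ℝ) (hab : a < b)
    (N : ℕ) (hN : 1 ≤ N)
    (p : Polynomial ℝ)
    (r s : ℝ≥0∞) (hs : 1 ≤ s) (hrs : 1 / r + 1 / s = 1)
    (f : ℝ → ℝ)
    (hLs : MemLp (iteratedDerivWithin n f (Set.Icc a b)) s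
      (volume.restrict (Set.Icc a b))) :
    ENNReal.ofReal
        |errEN a b N n (fun x => p.eval x) (iteratedDerivWithin n f (Set.Icc a b))| ≤
      ENNReal.ofReal ((b - a) ^ ((n : ℝ) + 1 / r.toReal) / (N : ℝ) ^ n) *
        eLpNorm (fun x => p.eval x) r (volume.restrict (Set.Icc (0:ℝ) 1)) *
        eLpNorm (iteratedDerivWithin n f (Set.Icc a b)) s
          (volume.restrict (Set.Icc a b)) := by
  have : HolderConjugate r s := holderConjugate_iff.2 (by simpa only [one_div] using hrs)
  have hb : a + N * ((b - a) / N) = b := by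
    rw [mul_div_cancel₀ _ (by positivity)]
    ring
  have hρ : 1 - 1 / s.toReal = 1 / r.toReal := by
    linarith [HolderConjugate.one_div_toReal_add_one_div_toReal (r := r) (s := s)]
  rw [← Real.enorm_eq_ofReal_abs]
  refine (enorm_errEN_le (r := r) (s := s) p.continuous.aestronglyMeasurable hLs.1 hab hN
    n).trans ?_
  calc _ ≤ ENNReal.ofReal (((b - a) / N) ^ ((n : ℝ) + 1 / r.toReal)) *
        eLpNorm (fun x => p.eval x) r (volume.restrict (Set.Icc 0 1)) *
        ((N : ℝ≥0∞) ^ (1 - 1 / s.toReal) *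
          eLpNorm (iteratedDerivWithin n f (Set.Icc a b)) s
            (volume.restrict (Set.Icc a (a + N * ((b - a) / N))))) := by
        gcongr
        exact sum_eLpNorm_restrict_Icc_le _ hs a (div_pos (sub_pos.2 hab) (by positivity)).le N
    _ = _ := by
        rw [hb, hρ, ← ENNReal.ofReal_div_natCast_rpow_mul_natCast_rpow (sub_pos.2 hab).le hN n
          (by positivity)]
        ring

/-- **composite Hölder error bound.** Let `n ≥ 1`, `a < b`, `N ≥ 1`,
`p` a real polynomial of degree `n` with leading coefficient `1/n!`, and `1 ≤ r, s ≤ ∞`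
conjugate exponents. If `f^{(n-1)}` is absolutely continuous on `[a,b]` and
`f^{(n)} ∈ L^s([a,b])`, then
`|E^N_{(a,b)}(p,f)| ≤ (b−a)^{n+1/r} N^{−n} ‖p‖_{L^r([0,1])} ‖f^{(n)}‖_{L^s([a,b])}`
(with the exponent read as `n` when `r = ∞`). -/
theorem composite_holder_error_bound (n : ℕ) (hn : 1 ≤ n) (a b : ℝ) (hab : a < b)
    (N : ℕ) (hN : 1 ≤ N)
    (p : Polynomial ℝ) (hdeg : p.natDegree = n)
    (hlead : p.leadingCoeff = 1 / (n.factorial : ℝ))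
    (r s : ℝ≥0∞) (hr : 1 ≤ r) (hs : 1 ≤ s) (hrs : 1 / r + 1 / s = 1)
    (f : ℝ → ℝ) (hreg : ContDiffOn ℝ (n - 1 : ℕ) f (Set.Icc a b))
    (hAC : ACOn (iteratedDerivWithin (n - 1) f (Set.Icc a b))
      (iteratedDerivWithin n f (Set.Icc a b)) a b)
    (hLs : MemLp (iteratedDerivWithin n f (Set.Icc a b)) s
      (volume.restrict (Set.Icc a b))) :
    ENNReal.ofReal
        |errEN a b N n (fun x => p.eval x) (iteratedDerivWithin n f (Set.Icc a b))| ≤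
      ENNReal.ofReal ((b - a) ^ ((n : ℝ) + 1 / r.toReal) / (N : ℝ) ^ n) *
        eLpNorm (fun x => p.eval x) r (volume.restrict (Set.Icc (0:ℝ) 1)) *
        eLpNorm (iteratedDerivWithin n f (Set.Icc a b)) s
          (volume.restrict (Set.Icc a b)) :=
  composite_holder_error_bound_general n a b hab N hN p r s hs hrs f hLs
end

section
/- Let n ≥ 1 be an integer, a < b real, and p a real polynomial of degree n with leading coefficient 1/n!. Then there exists f : [a,b] → ℝ with f^{(n-1)} absolutely continuous on [a,b], ‖f^{(n)}‖_{L^∞([a,b])} = 1, and |E_{(a,b)}(p,f)| = (b−a)^{n+1} ‖p‖_1; that is, the bound |E_{(a,b)}(p,f)| ≤ (b−a)^{n+1} ‖p‖_1 ‖f^{(n)}‖_{L^∞([a,b])} is attained (e.g. for any f with f^{(n)}(a+(b−a)x) = sgn(p(x)) for a.e. x ∈ [0,1]). -/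
/-!
Let `f` be the `n`-fold primitive, based at `a`, of the step function
`g x = sign p((x - a)/(b - a))`, with `g = 1` at zeros. Then `f` is `C^{n-1}`,
`f^{(n-1)}` is the primitive of `g`, and `g` is continuous off the finitely many zeros of the
rescaled `p`, so `f^{(n)} = g` almost everywhere on `[a, b]`. Hence `‖f^{(n)}‖_∞ = 1` and
`p(x) f^{(n)}(a + (b - a)x) = |p(x)|` on `[0, 1]`, which turns the error integral into `‖p‖_1`.
-/

open MeasureTheory intervalIntegral

open Set

theorem MeasureTheory.LocallyIntegrable.intervalIntegrable {E : Type*} [NormedAddCommGroup E]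
    {f : ℝ → E} {μ : Measure ℝ} (hf : LocallyIntegrable f μ) (c d : ℝ) :
    IntervalIntegrable f μ c d :=
  (hf.integrableOn_isCompact isCompact_uIcc).intervalIntegrable

noncomputable def signOrOne (y : ℝ) : ℝ :=
  if 0 ≤ y then 1 else -1

lemma abs_signOrOne (y : ℝ) : |signOrOne y| = 1 := by
  unfold signOrOne
  split_ifs <;> simp

lemma mul_signOrOne (y : ℝ) : y * signOrOne y = |y| := by
  unfold signOrOne
  split_ifs with h
  · rw [mul_one, abs_of_nonneg h]
  · rw [mul_neg_one, abs_of_neg (not_le.mp h)]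

lemma measurable_signOrOne : Measurable signOrOne :=
  Measurable.ite measurableSet_Ici measurable_const measurable_const

lemma continuousAt_signOrOne {y : ℝ} (hy : y ≠ 0) : ContinuousAt signOrOne y := by
  rcases hy.lt_or_gt with hy | hy
  · refine (continuousAt_const (y := (-1 : ℝ))).congr ?_
    filter_upwards [Iio_mem_nhds hy] with z hz
    simp [signOrOne, not_le.mpr (show z < 0 from hz)]
  · refine (continuousAt_const (y := (1 : ℝ))).congr ?_
    filter_upwards [Ioi_mem_nhds hy] with z hz
    simp [signOrOne, le_of_lt (show 0 < z from hz)]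

lemma locallyIntegrable_signOrOne_comp {α : Type*} [MeasurableSpace α] [TopologicalSpace α]
    {μ : Measure α} [IsLocallyFiniteMeasure μ] {q : α → ℝ} (hq : Measurable q) :
    LocallyIntegrable (fun x => signOrOne (q x)) μ :=
  (locallyIntegrable_const (1 : ℝ)).mono (measurable_signOrOne.comp hq).aestronglyMeasurable
    (ae_of_all _ fun x => by simp [abs_signOrOne])

noncomputable def iterPrimitive (g : ℝ → ℝ) (a : ℝ) : ℕ → ℝ → ℝ
  | 0 => g
  | k + 1 => fun x => ∫ t in a..x, iterPrimitive g a k t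

section IterPrimitive

variable {g : ℝ → ℝ} {a : ℝ}

lemma continuous_iterPrimitive_succ (hg : LocallyIntegrable g volume) (k : ℕ) :
    Continuous (iterPrimitive g a (k + 1)) := by
  induction k with
  | zero => exact continuous_primitive hg.intervalIntegrable a
  | succ k ih => exact continuous_primitive ih.intervalIntegrable a

lemma hasDerivAt_iterPrimitive_succ_succ (hg : LocallyIntegrable g volume) (k : ℕ) (x : ℝ) :
    HasDerivAt (iterPrimitive g a (k + 2)) (iterPrimitive g a (k + 1) x) x :=
  have hc := continuous_iterPrimitive_succ (a := a) hg k
  integral_hasDerivAt_right (hc.intervalIntegrable a x)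
    hc.aestronglyMeasurable.stronglyMeasurableAtFilter hc.continuousAt

lemma hasDerivAt_iterPrimitive_one (hg : LocallyIntegrable g volume) {x : ℝ}
    (hgx : ContinuousAt g x) : HasDerivAt (iterPrimitive g a 1) (g x) x :=
  integral_hasDerivAt_right (hg.intervalIntegrable a x)
    hg.aestronglyMeasurable.stronglyMeasurableAtFilter hgx

lemma deriv_iterPrimitive_succ_succ (hg : LocallyIntegrable g volume) (k : ℕ) :
    deriv (iterPrimitive g a (k + 2)) = iterPrimitive g a (k + 1) :=
  funext fun x => (hasDerivAt_iterPrimitive_succ_succ hg k x).deriv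

lemma contDiff_iterPrimitive_succ (hg : LocallyIntegrable g volume) (k : ℕ) :
    ContDiff ℝ k (iterPrimitive g a (k + 1)) := by
  induction k with
  | zero => exact contDiff_zero.mpr (continuous_iterPrimitive_succ hg 0)
  | succ k ih =>
    rw [Nat.cast_succ]
    refine contDiff_succ_iff_deriv.mpr
      ⟨fun x => (hasDerivAt_iterPrimitive_succ_succ hg k x).differentiableAt, by simp, ?_⟩
    rwa [deriv_iterPrimitive_succ_succ hg]

lemma iteratedDeriv_iterPrimitive (hg : LocallyIntegrable g volume) (k m : ℕ) :
    iteratedDeriv k (iterPrimitive g a (k + m + 1)) = iterPrimitive g a (m + 1) := by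
  induction k with
  | zero => simp
  | succ k ih =>
    rw [iteratedDeriv_succ', show k + 1 + m + 1 = k + m + 2 by ring,
      deriv_iterPrimitive_succ_succ hg, ih]

lemma iteratedDerivWithin_iterPrimitive (hg : LocallyIntegrable g volume) {s : Set ℝ}
    (hs : UniqueDiffOn ℝ s) (k : ℕ) :
    EqOn (iteratedDerivWithin k (iterPrimitive g a (k + 1)) s) (iterPrimitive g a 1) s := by
  intro x hx
  rw [iteratedDerivWithin_eq_iteratedDeriv hs (contDiff_iterPrimitive_succ hg k).contDiffAt hx,
    ← iteratedDeriv_iterPrimitive hg k 0]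

lemma iteratedDerivWithin_succ_iterPrimitive (hg : LocallyIntegrable g volume) {s : Set ℝ}
    (hs : UniqueDiffOn ℝ s) (k : ℕ) {x : ℝ} (hx : x ∈ s) (hgx : ContinuousAt g x) :
    iteratedDerivWithin (k + 1) (iterPrimitive g a (k + 1)) s x = g x := by
  have hk := iteratedDerivWithin_iterPrimitive (a := a) hg hs k
  rw [iteratedDerivWithin_succ, derivWithin_congr hk (hk hx)]
  exact (hasDerivAt_iterPrimitive_one hg hgx).hasDerivWithinAt.derivWithin (hs x hx)

end IterPrimitive

lemma acOn_iteratedDerivWithin_iterPrimitive {g : ℝ → ℝ} {a b : ℝ}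
    (hg : LocallyIntegrable g volume) (hab : a < b) (hgc : ∀ᵐ x, ContinuousAt g x) (k : ℕ) :
    ACOn (iteratedDerivWithin k (iterPrimitive g a (k + 1)) (Icc a b))
      (iteratedDerivWithin (k + 1) (iterPrimitive g a (k + 1)) (Icc a b)) a b := by
  have hs := uniqueDiffOn_Icc hab
  have hD : ∀ᵐ t, t ∈ Icc a b →
      iteratedDerivWithin (k + 1) (iterPrimitive g a (k + 1)) (Icc a b) t = g t := by
    filter_upwards [hgc] with t hgt hts using iteratedDerivWithin_succ_iterPrimitive hg hs k hts hgt
  have hP := iteratedDerivWithin_iterPrimitive (a := a) hg hs k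
  refine ⟨(hg.intervalIntegrable a b).congr_ae ?_, fun x hx => ?_⟩
  · rw [uIoc_of_le hab.le]
    exact (ae_restrict_iff' measurableSet_Ioc).2
      (hD.mono fun t ht hts => (ht (Ioc_subset_Icc_self hts)).symm)
  · have hDx : ∀ᵐ t, t ∈ uIoc a x →
        iteratedDerivWithin (k + 1) (iterPrimitive g a (k + 1)) (Icc a b) t = g t := by
      filter_upwards [hD] with t ht hts
      rw [uIoc_of_le hx.1] at hts
      exact ht ⟨hts.1.le, hts.2.trans hx.2⟩
    rw [hP hx, hP (left_mem_Icc.2 hab.le), integral_congr_ae hDx]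
    simp [iterPrimitive]

lemma eLpNorm_top_eq_one_of_ae_norm_eq_one {α E : Type*} [MeasurableSpace α]
    [NormedAddCommGroup E] {μ : Measure α} {f : α → E} (hf : ∀ᵐ x ∂μ, ‖f x‖ = 1) (hμ : μ ≠ 0) :
    eLpNorm f ⊤ μ = 1 := by
  rw [eLpNorm_congr_norm_ae (g := fun _ => (1 : ℝ)) (by simpa using hf),
    eLpNorm_const _ ENNReal.top_ne_zero hμ]
  simp

lemma Polynomial.ae_eval_ne_zero_of_injective {α R : Type*} [MeasurableSpace α] {μ : Measure α}
    [NullSingletonClass μ] [CommRing R] [IsDomain R] {p : Polynomial R} (hp : p ≠ 0)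
    {φ : α → R} (hφ : Function.Injective φ) : ∀ᵐ x ∂μ, p.eval (φ x) ≠ 0 := by
  refine ae_iff.2 (Set.Finite.measure_zero ?_ μ)
  simpa using (p.finite_setOfPred_isRoot hp).preimage hφ.injOn

lemma abs_errE_of_mul_eq_abs {a b : ℝ} (hab : a ≤ b) (n : ℕ) {p fn : ℝ → ℝ}
    (h : ∀ x ∈ Icc (0 : ℝ) 1, p x * fn (a + (b - a) * x) = |p x|) :
    |errE a b n p fn| = (b - a) ^ (n + 1) * ∫ x in (0 : ℝ)..1, |p x| := by
  have hint : ∫ x in (0 : ℝ)..1, p x * fn (a + (b - a) * x) = ∫ x in (0 : ℝ)..1, |p x| :=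
    integral_congr (by rwa [uIcc_of_le zero_le_one])
  rw [errE, hint, abs_mul, abs_mul, abs_pow, abs_neg, abs_one, one_pow, one_mul,
    abs_of_nonneg (pow_nonneg (sub_nonneg.2 hab) _),
    abs_of_nonneg (integral_nonneg zero_le_one fun x _ => abs_nonneg _)]

theorem holder_bound_sharp_one_infty_general (n : ℕ) (hn : 1 ≤ n) (a b : ℝ) (hab : a < b)
    (p : Polynomial ℝ) (hdeg : p.natDegree = n) :
    ∃ f : ℝ → ℝ,
      ContDiffOn ℝ (n - 1 : ℕ) f (Set.Icc a b) ∧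
      ACOn (iteratedDerivWithin (n - 1) f (Set.Icc a b))
        (iteratedDerivWithin n f (Set.Icc a b)) a b ∧
      eLpNorm (iteratedDerivWithin n f (Set.Icc a b)) ⊤
          (volume.restrict (Set.Icc a b)) = 1 ∧
      |errE a b n (fun x => p.eval x) (iteratedDerivWithin n f (Set.Icc a b))| =
        (b - a) ^ (n + 1) * ∫ x in (0:ℝ)..1, |p.eval x| := by
  obtain ⟨m, rfl⟩ : ∃ m, n = m + 1 := ⟨n - 1, by omega⟩
  rw [Nat.add_sub_cancel]
  have hp : p ≠ 0 := Polynomial.ne_zero_of_natDegree_gt (n := 0) (by omega)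
  set q : ℝ → ℝ := fun x => p.eval ((x - a) / (b - a))
  have hq : Continuous q := p.continuous.comp (by fun_prop)
  set g : ℝ → ℝ := fun x => signOrOne (q x)
  have hg : LocallyIntegrable g volume := locallyIntegrable_signOrOne_comp hq.measurable
  have hgc : ∀ x, q x ≠ 0 → ContinuousAt g x := fun x hx =>
    (continuousAt_signOrOne hx).comp hq.continuousAt
  have hq_ae : ∀ᵐ x, q x ≠ 0 :=
    p.ae_eval_ne_zero_of_injective hp fun x y h => by
      simpa [div_left_inj' (sub_pos.2 hab).ne'] using h
  have hD : ∀ x ∈ Icc a b, q x ≠ 0 →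
      iteratedDerivWithin (m + 1) (iterPrimitive g a (m + 1)) (Icc a b) x = g x :=
    fun x hx hqx =>
      iteratedDerivWithin_succ_iterPrimitive hg (uniqueDiffOn_Icc hab) m hx (hgc x hqx)
  refine ⟨iterPrimitive g a (m + 1), (contDiff_iterPrimitive_succ hg m).contDiffOn,
    acOn_iteratedDerivWithin_iterPrimitive hg hab (hq_ae.mono hgc) m,
    eLpNorm_top_eq_one_of_ae_norm_eq_one ?_ (by simp [hab]),
    abs_errE_of_mul_eq_abs hab.le _ fun x hx => ?_⟩
  · exact (ae_restrict_iff' measurableSet_Icc).2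
      (hq_ae.mono fun x hqx hx => by rw [hD x hx hqx, Real.norm_eq_abs, abs_signOrOne])
  · have hqx : q (a + (b - a) * x) = p.eval x := by
      simp only [q]
      rw [add_sub_cancel_left, mul_div_cancel_left₀ _ (sub_pos.2 hab).ne']
    have hmem : a + (b - a) * x ∈ Icc a b := by
      constructor <;> nlinarith [hx.1, hx.2]
    by_cases hpx : p.eval x = 0
    · simp [hpx]
    · rw [hD _ hmem (hqx ▸ hpx)]
      simp only [g, hqx, mul_signOrOne]

/-- **sharpness, `r = 1`, `s = ∞`.** For `n ≥ 1`, `a < b` and a real polynomial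
`p` of degree `n` with leading coefficient `1/n!`, there exists `f : [a,b] → ℝ` with `f^{(n-1)}`
absolutely continuous on `[a,b]`, `‖f^{(n)}‖_{L^∞([a,b])} = 1`, and
`|E_{(a,b)}(p,f)| = (b−a)^{n+1} ‖p‖_{L^1([0,1])}`. -/
theorem holder_bound_sharp_one_infty (n : ℕ) (hn : 1 ≤ n) (a b : ℝ) (hab : a < b)
    (p : Polynomial ℝ) (hdeg : p.natDegree = n)
    (hlead : p.leadingCoeff = 1 / (n.factorial : ℝ)) :
    ∃ f : ℝ → ℝ,
      ContDiffOn ℝ (n - 1 : ℕ) f (Set.Icc a b) ∧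
      ACOn (iteratedDerivWithin (n - 1) f (Set.Icc a b))
        (iteratedDerivWithin n f (Set.Icc a b)) a b ∧
      eLpNorm (iteratedDerivWithin n f (Set.Icc a b)) ⊤
          (volume.restrict (Set.Icc a b)) = 1 ∧
      |errE a b n (fun x => p.eval x) (iteratedDerivWithin n f (Set.Icc a b))| =
        (b - a) ^ (n + 1) * ∫ x in (0:ℝ)..1, |p.eval x| :=
  holder_bound_sharp_one_infty_general n hn a b hab p hdeg
end

section
/- Let n ≥ 1 be an integer, a < b real, p a real polynomial of degree n with leading coefficient 1/n!, and let 1 < r < ∞ with s = r/(r−1). Then there exists f : [a,b] → ℝ with f^{(n-1)} absolutely continuous on [a,b], f^{(n)} ∈ L^s([a,b]) with ‖f^{(n)}‖_{L^s([a,b])} > 0, and |E_{(a,b)}(p,f)| = (b−a)^{n+1/r} ‖p‖_r ‖f^{(n)}‖_{L^s([a,b])}; equality holds for any f with f^{(n)}(a+(b−a)x) = |p(x)|^{r/s} sgn(p(x)) for a.e. x ∈ [0,1]. -/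
/-! Hölder's inequality `|∫₀¹ p g| ≤ ‖p‖_r ‖g‖_s` is an equality for `g = sgn(p) |p|^{r-1}`,
since then `p g = |p|^r = |g|^s`. So take for `f` the `n`-fold primitive of the function
`y ↦ g((y - a)/(b - a))`; after the affine change of variables both sides of the claimed identity
equal `(b - a)^{n+1} ∫₀¹ |p|^r`, which is positive because `p ≠ 0` has only finitely many roots. -/

open MeasureTheory intervalIntegral

open Set Polynomial

noncomputable def sgnPow (e t : ℝ) : ℝ := SignType.sign t * |t| ^ e

section sgnPow

variable {e : ℝ}

lemma sgnPow_eq_sub (he : 0 < e) (t : ℝ) : sgnPow e t = max t 0 ^ e - max (-t) 0 ^ e := by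
  rcases lt_trichotomy t 0 with h | rfl | h
  · simp [sgnPow, sign_neg h, abs_of_neg h, max_eq_right h.le, max_eq_left (neg_nonneg.2 h.le),
      Real.zero_rpow he.ne']
  · simp [sgnPow, Real.zero_rpow he.ne']
  · simp [sgnPow, sign_pos h, abs_of_pos h, max_eq_left h.le, max_eq_right (neg_nonpos.2 h.le),
      Real.zero_rpow he.ne']

lemma continuous_sgnPow (he : 0 < e) : Continuous (sgnPow e) := by
  have hmax : ∀ {g : ℝ → ℝ}, Continuous g → Continuous fun t => max (g t) 0 ^ e :=
    fun hg => (hg.max continuous_const).rpow_const fun _ => Or.inr he.le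
  rw [funext (sgnPow_eq_sub he)]
  exact (hmax continuous_id).sub (hmax continuous_neg)

lemma mul_sgnPow_self (he : 0 < e) (t : ℝ) : t * sgnPow e t = |t| ^ (e + 1) := by
  rw [sgnPow, ← mul_assoc, self_mul_sign, Real.rpow_add' (abs_nonneg t) (by positivity),
    Real.rpow_one, mul_comm]

lemma abs_sgnPow (he : e ≠ 0) (t : ℝ) : |sgnPow e t| = |t| ^ e := by
  rcases lt_trichotomy t 0 with h | rfl | h
  · simp [sgnPow, sign_neg h, abs_of_nonneg (Real.rpow_nonneg (abs_nonneg t) e)]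
  · simp [sgnPow, Real.zero_rpow he]
  · simp [sgnPow, sign_pos h, abs_of_nonneg (Real.rpow_nonneg (abs_nonneg t) e)]

end sgnPow

noncomputable def iteratedPrimitive (g : ℝ → ℝ) : ℕ → ℝ → ℝ
  | 0 => g
  | k + 1 => fun x => ∫ t in (0 : ℝ)..x, iteratedPrimitive g k t

section iteratedPrimitive

variable {g : ℝ → ℝ}

lemma hasDerivAt_iteratedPrimitive_succ {k : ℕ} (hk : Continuous (iteratedPrimitive g k))
    (x : ℝ) : HasDerivAt (iteratedPrimitive g (k + 1)) (iteratedPrimitive g k x) x :=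
  (hk.integral_hasStrictDerivAt 0 x).hasDerivAt

lemma continuous_iteratedPrimitive (hg : Continuous g) : ∀ k, Continuous (iteratedPrimitive g k)
  | 0 => hg
  | k + 1 => continuous_iff_continuousAt.2 fun x =>
    (hasDerivAt_iteratedPrimitive_succ (continuous_iteratedPrimitive hg k) x).continuousAt

lemma deriv_iteratedPrimitive_succ (hg : Continuous g) (k : ℕ) :
    deriv (iteratedPrimitive g (k + 1)) = iteratedPrimitive g k :=
  funext fun x => (hasDerivAt_iteratedPrimitive_succ (continuous_iteratedPrimitive hg k) x).deriv

lemma contDiff_iteratedPrimitive (hg : Continuous g) :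
    ∀ k : ℕ, ContDiff ℝ k (iteratedPrimitive g k)
  | 0 => contDiff_zero.2 hg
  | k + 1 => by
    rw [Nat.cast_succ, contDiff_succ_iff_deriv, deriv_iteratedPrimitive_succ hg]
    exact ⟨fun x => (hasDerivAt_iteratedPrimitive_succ (continuous_iteratedPrimitive hg k) x)
      |>.differentiableAt, by simp, contDiff_iteratedPrimitive hg k⟩

lemma iteratedDeriv_iteratedPrimitive (hg : Continuous g) :
    ∀ j k : ℕ, iteratedDeriv j (iteratedPrimitive g (k + j)) = iteratedPrimitive g k
  | 0, k => by simp
  | j + 1, k => by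
    rw [iteratedDeriv_succ', ← add_assoc, deriv_iteratedPrimitive_succ hg,
      iteratedDeriv_iteratedPrimitive hg j k]

lemma iteratedDerivWithin_iteratedPrimitive (hg : Continuous g) {s : Set ℝ}
    (hs : UniqueDiffOn ℝ s) {x : ℝ} (hx : x ∈ s) (j k : ℕ) :
    iteratedDerivWithin j (iteratedPrimitive g (k + j)) s x = iteratedPrimitive g k x := by
  have hj : ContDiffAt ℝ j (iteratedPrimitive g (k + j)) x :=
    (contDiff_iteratedPrimitive hg (k + j)).contDiffAt.of_le (by exact_mod_cast Nat.le_add_left j k)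
  rw [iteratedDerivWithin_eq_iteratedDeriv hs hj hx, iteratedDeriv_iteratedPrimitive hg]

end iteratedPrimitive

lemma acOn_of_eqOn_primitive {g F F' : ℝ → ℝ} {a b : ℝ} (hg : Continuous g) (hab : a ≤ b)
    (hF : EqOn F (fun x => ∫ t in (0 : ℝ)..x, g t) (Icc a b)) (hF' : EqOn F' g (Icc a b)) :
    ACOn F F' a b := by
  have hF'u : EqOn F' g (uIcc a b) := by rwa [uIcc_of_le hab]
  refine ⟨(intervalIntegrable_congr (hF'u.symm.mono uIoc_subset_uIcc)).1
    (hg.intervalIntegrable a b), fun x hx => ?_⟩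
  have hax : uIcc a x ⊆ Icc a b := uIcc_subset_Icc (left_mem_Icc.2 hab) hx
  rw [hF hx, hF (left_mem_Icc.2 hab), integral_congr (hF'.mono hax),
    integral_add_adjacent_intervals (hg.intervalIntegrable _ _) (hg.intervalIntegrable _ _)]

lemma integral_abs_eval_rpow_pos {p : ℝ[X]} (hp : p ≠ 0) {r : ℝ} (hr : 0 < r) {a b : ℝ}
    (hab : a < b) : 0 < ∫ x in a..b, |p.eval x| ^ r := by
  have hint : IntervalIntegrable (fun x => |p.eval x| ^ r) volume a b :=
    ((p.continuous.abs).rpow_const fun _ => Or.inr hr.le).intervalIntegrable a b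
  rw [integral_pos_iff_support_of_nonneg_ae (ae_of_all _ fun _ => by positivity) hint]
  refine ⟨hab, ?_⟩
  have hroots : volume {x | p.IsRoot x} = 0 := (finite_setOfPred_isRoot hp).measure_zero _
  calc 0 < volume (Ioc a b) := by simp [hab]
    _ = volume (Ioc a b \ {x | p.IsRoot x}) := (measure_sdiff_null hroots).symm
    _ ≤ volume (Function.support (fun x => |p.eval x| ^ r) ∩ Ioc a b) :=
      measure_mono fun x hx => ⟨(Real.rpow_pos_of_pos (abs_pos.2 hx.2) r).ne', hx.1⟩

lemma integral_comp_unitInterval (h : ℝ → ℝ) {a b : ℝ} (hab : a < b) :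
    ∫ y in a..b, h ((y - a) / (b - a)) = (b - a) * ∫ x in (0 : ℝ)..1, h x := by
  have hc : b - a ≠ 0 := (sub_pos.2 hab).ne'
  simp only [sub_div]
  rw [integral_comp_div_sub h hc, sub_self, ← sub_div, div_self hc, smul_eq_mul]

noncomputable def holderExtremal (r a b : ℝ) (φ : ℝ → ℝ) (y : ℝ) : ℝ :=
  sgnPow (r - 1) (φ ((y - a) / (b - a)))

section holderExtremal

variable {r s a b : ℝ} {φ F : ℝ → ℝ}

lemma continuous_holderExtremal (hr : 1 < r) (hφ : Continuous φ) :
    Continuous (holderExtremal r a b φ) :=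
  (continuous_sgnPow (sub_pos.2 hr)).comp
    (hφ.comp ((continuous_id.sub continuous_const).div_const _))

lemma integral_abs_rpow_of_eqOn_holderExtremal (hrs : r.HolderConjugate s) (hab : a < b)
    (hF : EqOn F (holderExtremal r a b φ) (Icc a b)) :
    ∫ y in a..b, |F y| ^ s = (b - a) * ∫ x in (0 : ℝ)..1, |φ x| ^ r := by
  rw [← integral_comp_unitInterval _ hab]
  refine integral_congr fun y hy => ?_
  rw [uIcc_of_le hab.le] at hy
  simp only [hF hy, holderExtremal, abs_sgnPow hrs.sub_one_ne_zero, ← Real.rpow_mul (abs_nonneg _),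
    hrs.sub_one_mul_conj]

lemma integral_mul_comp_of_eqOn_holderExtremal (hr : 1 < r) (hab : a < b)
    (hF : EqOn F (holderExtremal r a b φ) (Icc a b)) :
    ∫ x in (0 : ℝ)..1, φ x * F (a + (b - a) * x) = ∫ x in (0 : ℝ)..1, |φ x| ^ r := by
  refine integral_congr fun x hx => ?_
  rw [uIcc_of_le zero_le_one] at hx
  have hmem : a + (b - a) * x ∈ Icc a b := ⟨by nlinarith [hx.1], by nlinarith [hx.2]⟩
  have hc : b - a ≠ 0 := (sub_pos.2 hab).ne'
  simp only [hF hmem, holderExtremal, add_sub_cancel_left, mul_div_cancel_left₀ _ hc,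
    mul_sgnPow_self (sub_pos.2 hr), sub_add_cancel]

lemma abs_errE_of_eqOn_holderExtremal (hrs : r.HolderConjugate s) (hab : a < b)
    (hF : EqOn F (holderExtremal r a b φ) (Icc a b)) (n : ℕ) :
    |errE a b n φ F| = (b - a) ^ ((n : ℝ) + 1 / r) * (∫ x in (0 : ℝ)..1, |φ x| ^ r) ^ (1 / r) *
      (∫ y in a..b, |F y| ^ s) ^ (1 / s) := by
  set A := ∫ x in (0 : ℝ)..1, |φ x| ^ r
  have hc : 0 < b - a := sub_pos.2 hab
  have hA : 0 ≤ A := integral_nonneg zero_le_one fun _ _ => by positivity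
  have hinv : 1 / r + 1 / s = 1 := by rw [one_div, one_div, hrs.inv_add_inv_eq_one]
  rw [errE, integral_mul_comp_of_eqOn_holderExtremal hrs.lt hab hF,
    integral_abs_rpow_of_eqOn_holderExtremal hrs hab hF, abs_mul, abs_mul, abs_pow, abs_neg,
    abs_one, one_pow, one_mul, abs_pow, abs_of_pos hc, abs_of_nonneg hA, Real.mul_rpow hc.le hA]
  calc (b - a) ^ (n + 1) * A = (b - a) ^ ((n : ℝ) + 1 / r + 1 / s) * A ^ (1 / r + 1 / s) := by
        rw [add_assoc, hinv, Real.rpow_one]; norm_cast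
    _ = _ := by
        rw [Real.rpow_add hc, Real.rpow_add' hA (by rw [hinv]; exact one_ne_zero)]; ring

end holderExtremal

theorem holder_bound_sharp_general (n : ℕ) (hn : 1 ≤ n) (a b : ℝ) (hab : a < b)
    (p : Polynomial ℝ) (hdeg : p.natDegree = n)
    (r s : ℝ) (hr : 1 < r) (hs : s = r / (r - 1)) :
    ∃ f : ℝ → ℝ,
      ContDiffOn ℝ (n - 1 : ℕ) f (Set.Icc a b) ∧
      ACOn (iteratedDerivWithin (n - 1) f (Set.Icc a b))
        (iteratedDerivWithin n f (Set.Icc a b)) a b ∧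
      (0 : ℝ) <
        (∫ x in a..b, |iteratedDerivWithin n f (Set.Icc a b) x| ^ s) ^ (1 / s) ∧
      |errE a b n (fun x => p.eval x) (iteratedDerivWithin n f (Set.Icc a b))| =
        (b - a) ^ ((n : ℝ) + 1 / r) * (∫ x in (0:ℝ)..1, |p.eval x| ^ r) ^ (1 / r) *
          (∫ x in a..b, |iteratedDerivWithin n f (Set.Icc a b) x| ^ s) ^ (1 / s) := by
  obtain ⟨m, rfl⟩ : ∃ m, n = m + 1 := ⟨n - 1, by omega⟩
  have hrs : r.HolderConjugate s := (Real.holderConjugate_iff_eq_conjExponent hr).2 hs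
  have hp : p ≠ 0 := by rintro rfl; simp at hdeg
  set G := holderExtremal r a b fun x => p.eval x
  have hG : Continuous G := continuous_holderExtremal hr p.continuous
  have hD : ∀ k j, k + j = m + 1 → EqOn (iteratedDerivWithin j (iteratedPrimitive G (m + 1))
      (Icc a b)) (iteratedPrimitive G k) (Icc a b) := fun k j hkj x hx => by
    rw [← hkj]; exact iteratedDerivWithin_iteratedPrimitive hG (uniqueDiffOn_Icc hab) hx j k
  have hDn : EqOn (iteratedDerivWithin (m + 1) (iteratedPrimitive G (m + 1)) (Icc a b)) G
      (Icc a b) := hD 0 (m + 1) (zero_add _)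
  refine ⟨iteratedPrimitive G (m + 1), ?_, ?_, ?_, abs_errE_of_eqOn_holderExtremal hrs hab hDn _⟩
  · exact (contDiff_iteratedPrimitive hG _).contDiffOn.of_le (by exact_mod_cast Nat.sub_le _ _)
  · exact acOn_of_eqOn_primitive hG hab.le (hD 1 m (add_comm 1 m)) hDn
  · rw [integral_abs_rpow_of_eqOn_holderExtremal hrs hab hDn]
    exact Real.rpow_pos_of_pos
      (mul_pos (sub_pos.2 hab) (integral_abs_eval_rpow_pos hp hrs.pos zero_lt_one)) _

/-- **sharpness, `1 < r < ∞`.** For `n ≥ 1`, `a < b`, a real polynomial `p` of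
degree `n` with leading coefficient `1/n!`, and `1 < r < ∞` with `s = r/(r−1)`, there exists
`f : [a,b] → ℝ` with `f^{(n-1)}` absolutely continuous on `[a,b]`, `f^{(n)} ∈ L^s([a,b])` with
`‖f^{(n)}‖_{L^s} > 0`, and `|E_{(a,b)}(p,f)| = (b−a)^{n+1/r} ‖p‖_r ‖f^{(n)}‖_{L^s([a,b])}`. -/
theorem holder_bound_sharp (n : ℕ) (hn : 1 ≤ n) (a b : ℝ) (hab : a < b)
    (p : Polynomial ℝ) (hdeg : p.natDegree = n)
    (hlead : p.leadingCoeff = 1 / (n.factorial : ℝ))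
    (r s : ℝ) (hr : 1 < r) (hs : s = r / (r - 1)) :
    ∃ f : ℝ → ℝ,
      ContDiffOn ℝ (n - 1 : ℕ) f (Set.Icc a b) ∧
      ACOn (iteratedDerivWithin (n - 1) f (Set.Icc a b))
        (iteratedDerivWithin n f (Set.Icc a b)) a b ∧
      (0 : ℝ) <
        (∫ x in a..b, |iteratedDerivWithin n f (Set.Icc a b) x| ^ s) ^ (1 / s) ∧
      |errE a b n (fun x => p.eval x) (iteratedDerivWithin n f (Set.Icc a b))| =
        (b - a) ^ ((n : ℝ) + 1 / r) * (∫ x in (0:ℝ)..1, |p.eval x| ^ r) ^ (1 / r) *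
          (∫ x in a..b, |iteratedDerivWithin n f (Set.Icc a b) x| ^ s) ^ (1 / s) :=
  holder_bound_sharp_general n hn a b hab p hdeg r s hr hs
end

section
/- Let n ≥ 1 be an integer, a < b real, and p a real polynomial of degree n with leading coefficient 1/n!. Then the bound |E_{(a,b)}(p,f)| ≤ (b−a)^n ‖p‖_∞ ‖f^{(n)}‖_{L^1([a,b])} is sharp: there is a sequence of functions f_k : [a,b] → ℝ, each with f_k^{(n-1)} absolutely continuous on [a,b] and ‖f_k^{(n)}‖_{L^1([a,b])} = b−a, such that |E_{(a,b)}(p,f_k)| → (b−a)^{n+1} ‖p‖_∞ as k → ∞. -/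
/-!
The `n`-th derivative of the `k`-th extremal function is `c_k p((x-a)/(b-a))^(2k+1)`, with
`c_k > 0` normalising its `L¹` norm to `b - a`. The odd power makes `p · f_k^(n)` a positive
multiple of `|p|^(2k+2)`, so `|E| = (b-a)^(n+1) ∫₀¹ |p|^(2k+2) / ∫₀¹ |p|^(2k+1)`. Ratios of
consecutive moments of a nonnegative bounded function tend to its essential supremum: for
`c < c₁ < max |p|`, the part of `∫ |p|^m` where `|p| ≤ c` is at most `c^m`, negligible against
`c₁^m · |{|p| > c₁}|`, and on the rest `|p|^(m+1) ≥ c |p|^m`.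
-/

open MeasureTheory intervalIntegral Filter

open Polynomial Set Topology
open scoped ContDiff

namespace Polynomial

variable {K : Type*} [Field K] [CharZero K]

theorem exists_derivative_eq (q : K[X]) : ∃ Q : K[X], derivative Q = q := by
  induction q using Polynomial.induction_on' with
  | add p q hp hq =>
    obtain ⟨P, rfl⟩ := hp
    obtain ⟨Q, rfl⟩ := hq
    exact ⟨P + Q, derivative_add⟩
  | monomial i c =>
    refine ⟨C (c / (i + 1)) * X ^ (i + 1), ?_⟩
    rw [derivative_C_mul_X_pow, ← C_mul_X_pow_eq_monomial]
    congr 1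
    push_cast
    field_simp

theorem exists_iterate_derivative_eq (n : ℕ) (q : K[X]) :
    ∃ Q : K[X], derivative^[n] Q = q := by
  induction n generalizing q with
  | zero => exact ⟨q, rfl⟩
  | succ n ih =>
    obtain ⟨Q, rfl⟩ := exists_derivative_eq q
    obtain ⟨P, rfl⟩ := ih Q
    exact ⟨P, Function.iterate_succ_apply' _ _ _⟩

variable {𝕜 : Type*} [NontriviallyNormedField 𝕜]

theorem contDiff_eval (p : 𝕜[X]) (n : WithTop ℕ∞) : ContDiff 𝕜 n fun x => p.eval x := by
  simpa using p.contDiff_aeval (𝕜 := 𝕜) n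

theorem iteratedDeriv_eval (p : 𝕜[X]) (m : ℕ) :
    iteratedDeriv m (fun x => p.eval x) = fun x => (derivative^[m] p).eval x := by
  induction m generalizing p with
  | zero => rfl
  | succ m ih =>
    have hderiv : _root_.deriv (fun x => p.eval x) = fun x => p.derivative.eval x := by
      ext x; exact p.deriv
    rw [iteratedDeriv_succ', hderiv, ih, Function.iterate_succ_apply]

end Polynomial

theorem exists_contDiff_iteratedDerivWithin_eq_eval (q : ℝ[X]) (n : ℕ) {a b : ℝ} (hab : a < b) :
    ∃ F : ℝ → ℝ, ContDiff ℝ ∞ F ∧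
      EqOn (iteratedDerivWithin n F (Icc a b)) (fun x => q.eval x) (Icc a b) := by
  obtain ⟨Q, rfl⟩ := exists_iterate_derivative_eq n q
  refine ⟨fun x => Q.eval x, Q.contDiff_eval ∞, fun x hx => ?_⟩
  rw [iteratedDerivWithin_eq_iteratedDeriv (uniqueDiffOn_Icc hab) (Q.contDiff_eval n).contDiffAt hx,
    Q.iteratedDeriv_eval]

theorem acOn_iteratedDerivWithin_of_contDiff {F : ℝ → ℝ} {n : ℕ} (hF : ContDiff ℝ (n + 1) F)
    {a b : ℝ} (hab : a < b) :
    ACOn (iteratedDerivWithin n F (Icc a b)) (iteratedDerivWithin (n + 1) F (Icc a b)) a b := by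
  have hs := uniqueDiffOn_Icc hab
  have hderiv : ∀ m ≤ n + 1,
      EqOn (iteratedDerivWithin m F (Icc a b)) (iteratedDeriv m F) (Icc a b) := fun m hm x hx =>
    iteratedDerivWithin_eq_iteratedDeriv hs (hF.contDiffAt.of_le (by exact_mod_cast hm)) hx
  refine ⟨(hF.contDiffOn.continuousOn_iteratedDerivWithin le_rfl hs).intervalIntegrable_of_Icc
    hab.le, fun x hx => ?_⟩
  have hsub : uIcc a x ⊆ Icc a b := by
    rw [uIcc_of_le hx.1]; exact Icc_subset_Icc_right hx.2
  rw [integral_congr ((hderiv _ le_rfl).mono hsub), iteratedDeriv_succ,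
    integral_deriv_eq_sub (fun _ _ => (hF.differentiable_iteratedDeriv' n).differentiableAt)
      (by rw [← iteratedDeriv_succ]
          exact (hF.continuous_iteratedDeriv' ..).intervalIntegrable _ _),
    hderiv n (by omega) hx, hderiv n (by omega) (left_mem_Icc.2 hab.le)]
  ring

theorem mul_pow_le_pow_succ_add_pow_succ {c x : ℝ} (hc : 0 ≤ c) (hx : 0 ≤ x) (m : ℕ) :
    c * x ^ m ≤ x ^ (m + 1) + c ^ (m + 1) := by
  rw [pow_succ', pow_succ']
  rcases le_total c x with hcx | hxc
  · exact le_add_of_le_of_nonneg (by gcongr) (by positivity)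
  · exact le_add_of_nonneg_of_le (by positivity) (by gcongr)

section MomentRatio

variable {α : Type*} [MeasurableSpace α] {μ : Measure α} {q : α → ℝ} {M : ℝ}

theorem integrable_pow_of_ae_le [IsFiniteMeasure μ] (hq : AEStronglyMeasurable q μ)
    (hq0 : ∀ x, 0 ≤ q x) (hqM : ∀ᵐ x ∂μ, q x ≤ M) (m : ℕ) : Integrable (fun x => q x ^ m) μ :=
  .of_bound (hq.pow m) (M ^ m) <| hqM.mono fun x hx => by
    rw [Real.norm_eq_abs, abs_pow, abs_of_nonneg (hq0 x)]
    exact pow_le_pow_left₀ (hq0 x) hx m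

theorem pow_mul_measureReal_lt_le_integral_pow [IsFiniteMeasure μ] {m : ℕ}
    (hint : Integrable (fun x => q x ^ m) μ) (hq0 : ∀ x, 0 ≤ q x) {c : ℝ} (hc : 0 ≤ c) :
    c ^ m * μ.real {x | c < q x} ≤ ∫ x, q x ^ m ∂μ :=
  calc c ^ m * μ.real {x | c < q x} ≤ c ^ m * μ.real {x | c ^ m ≤ q x ^ m} := by
        gcongr
        · exact measure_ne_top μ _
        · exact fun hx => pow_le_pow_left₀ hc hx.le m
    _ ≤ ∫ x, q x ^ m ∂μ :=
        mul_meas_ge_le_integral_of_nonneg (.of_forall fun x => pow_nonneg (hq0 x) m) hint _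

theorem integral_pow_succ_le (hint : ∀ m, Integrable (fun x => q x ^ m) μ)
    (hq0 : ∀ x, 0 ≤ q x) (hqM : ∀ᵐ x ∂μ, q x ≤ M) (m : ℕ) :
    ∫ x, q x ^ (m + 1) ∂μ ≤ M * ∫ x, q x ^ m ∂μ := by
  rw [← MeasureTheory.integral_const_mul]
  refine integral_mono_ae (hint _) ((hint m).const_mul M) (hqM.mono fun x hx => ?_)
  simp only [pow_succ']
  exact mul_le_mul_of_nonneg_right hx (pow_nonneg (hq0 x) m)

theorem mul_integral_pow_le [IsFiniteMeasure μ] (hint : ∀ m, Integrable (fun x => q x ^ m) μ)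
    (hq0 : ∀ x, 0 ≤ q x) {c : ℝ} (hc : 0 ≤ c) (m : ℕ) :
    c * ∫ x, q x ^ m ∂μ ≤ ∫ x, q x ^ (m + 1) ∂μ + c ^ (m + 1) * μ.real univ := by
  have hconst : c ^ (m + 1) * μ.real univ = ∫ _, c ^ (m + 1) ∂μ := by
    rw [MeasureTheory.integral_const, smul_eq_mul, mul_comm]
  rw [hconst, ← MeasureTheory.integral_const_mul, ← integral_add (hint _) (integrable_const _)]
  exact integral_mono ((hint m).const_mul c) ((hint _).add (integrable_const _))
    fun x => mul_pow_le_pow_succ_add_pow_succ hc (hq0 x) m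

variable [IsFiniteMeasure μ] (hq : AEStronglyMeasurable q μ) (hq0 : ∀ x, 0 ≤ q x)
  (hqM : ∀ᵐ x ∂μ, q x ≤ M) (hlarge : ∀ c < M, 0 < μ {x | c < q x})
include hq hq0 hqM hlarge

theorem integral_pow_pos (hM : 0 < M) (m : ℕ) : 0 < ∫ x, q x ^ m ∂μ := by
  have hc : 0 < M / 2 := half_pos hM
  calc 0 < (M / 2) ^ m * μ.real {x | M / 2 < q x} :=
        mul_pos (pow_pos hc m)
          (ENNReal.toReal_pos (hlarge _ (half_lt_self hM)).ne' (measure_ne_top μ _))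
    _ ≤ _ :=
        pow_mul_measureReal_lt_le_integral_pow (integrable_pow_of_ae_le hq hq0 hqM m) hq0 hc.le

theorem tendsto_integral_pow_succ_div_integral_pow (hM : 0 < M) :
    Tendsto (fun m : ℕ => (∫ x, q x ^ (m + 1) ∂μ) / ∫ x, q x ^ m ∂μ) atTop (𝓝 M) := by
  have hint := integrable_pow_of_ae_le hq hq0 hqM
  have hpos := integral_pow_pos hq hq0 hqM hlarge hM
  refine tendsto_order.2 ⟨fun a' ha' => ?_, fun a' ha' => .of_forall fun m => ?_⟩
  · obtain ⟨c, hac, hcM⟩ := exists_between (max_lt ha' hM)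
    obtain ⟨c₁, hcc₁, hc₁M⟩ := exists_between hcM
    have hc : 0 < c := (le_max_right _ _).trans_lt hac
    have hc₁ : 0 < c₁ := hc.trans hcc₁
    have hL : 0 < μ.real {x | c₁ < q x} :=
      ENNReal.toReal_pos (hlarge c₁ hc₁M).ne' (measure_ne_top μ _)
    set K := μ.real univ / μ.real {x | c₁ < q x}
    -- by Markov, `∫ q ^ m ≥ c₁ ^ m * μ {c₁ < q}`
    have herr : ∀ m : ℕ,
        c - c * K * (c / c₁) ^ m ≤ (∫ x, q x ^ (m + 1) ∂μ) / ∫ x, q x ^ m ∂μ := by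
      intro m
      have hlow := pow_mul_measureReal_lt_le_integral_pow (hint m) hq0 hc₁.le
      have hmain := mul_integral_pow_le hint hq0 hc.le m
      have hK : 0 ≤ K := by positivity
      have hsmall : c ^ (m + 1) * μ.real univ ≤ c * K * (c / c₁) ^ m * ∫ x, q x ^ m ∂μ :=
        calc c ^ (m + 1) * μ.real univ
            = c * K * (c / c₁) ^ m * (c₁ ^ m * μ.real {x | c₁ < q x}) := by
              simp only [K, div_pow]; field_simp; ring
          _ ≤ _ := by gcongr
      rw [le_div_iff₀ (hpos m)]
      linarith
    have hdecay : Tendsto (fun m : ℕ => c - c * K * (c / c₁) ^ m) atTop (𝓝 c) := by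
      simpa using tendsto_const_nhds.sub ((tendsto_pow_atTop_nhds_zero_of_lt_one (by positivity)
        ((div_lt_one hc₁).2 hcc₁)).const_mul (c * K))
    filter_upwards [hdecay.eventually (lt_mem_nhds ((le_max_left _ _).trans_lt hac))] with m hm
    exact hm.trans_le (herr m)
  · exact ((div_le_iff₀ (hpos m)).2 (integral_pow_succ_le hint hq0 hqM m)).trans_lt ha'

end MomentRatio

theorem measure_restrict_Ioc_setOf_lt_pos {f : ℝ → ℝ} (hf : Continuous f) {a b c : ℝ}
    (hab : a < b) (hc : c < sSup (f '' Icc a b)) : 0 < volume.restrict (Ioc a b) {x | c < f x} := by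
  obtain ⟨_, ⟨x, hx, rfl⟩, hcx⟩ := exists_lt_of_lt_csSup ((nonempty_Icc.2 hab.le).image f) hc
  have hU : IsOpen {x | c < f x} := isOpen_lt continuous_const hf
  rw [← closure_Ioo hab.ne] at hx
  rw [Measure.restrict_apply hU.measurableSet]
  exact ((hU.inter isOpen_Ioo).measure_pos volume (mem_closure_iff.1 hx _ hU hcx)).trans_le
    (measure_mono (inter_subset_inter_right _ Ioo_subset_Ioc_self))

theorem ae_restrict_Ioc_le_sSup_image {f : ℝ → ℝ} (hf : Continuous f) (a b : ℝ) :
    ∀ᵐ x ∂volume.restrict (Ioc a b), f x ≤ sSup (f '' Icc a b) :=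
  ae_restrict_of_forall_mem measurableSet_Ioc fun _ hx =>
    le_csSup (isCompact_Icc.bddAbove_image hf.continuousOn)
      (mem_image_of_mem f (Ioc_subset_Icc_self hx))

theorem Polynomial.sSup_abs_eval_Icc_pos {p : ℝ[X]} (hp : p ≠ 0) {a b : ℝ} (hab : a < b) :
    0 < sSup ((fun x => |p.eval x|) '' Icc a b) := by
  obtain ⟨x, hx, hroot⟩ :=
    (Icc_infinite hab).exists_notMem_finite (p.finite_setOfPred_isRoot hp)
  exact (abs_pos.2 hroot).trans_le <|
    le_csSup (isCompact_Icc.bddAbove_image p.continuous.abs.continuousOn) (mem_image_of_mem _ hx)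

section Interval

variable {f : ℝ → ℝ} {a b : ℝ} (hf : Continuous f) (hf0 : ∀ x, 0 ≤ f x) (hab : a < b)
  (hM : 0 < sSup (f '' Icc a b))
include hf hf0 hab hM

theorem Continuous.intervalIntegral_pow_pos (m : ℕ) : 0 < ∫ x in a..b, f x ^ m := by
  rw [integral_of_le hab.le]
  exact integral_pow_pos hf.aestronglyMeasurable hf0 (ae_restrict_Ioc_le_sSup_image hf a b)
    (fun _ hc => measure_restrict_Ioc_setOf_lt_pos hf hab hc) hM m

theorem Continuous.tendsto_intervalIntegral_pow_succ_div :
    Tendsto (fun m : ℕ => (∫ x in a..b, f x ^ (m + 1)) / ∫ x in a..b, f x ^ m) atTop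
      (𝓝 (sSup (f '' Icc a b))) := by
  simp only [integral_of_le hab.le]
  exact tendsto_integral_pow_succ_div_integral_pow hf.aestronglyMeasurable hf0
    (ae_restrict_Ioc_le_sSup_image hf a b)
    (fun _ hc => measure_restrict_Ioc_setOf_lt_pos hf hab hc) hM

end Interval

theorem errE_congr {a b : ℝ} (hab : a ≤ b) (n : ℕ) (p : ℝ → ℝ) {fn fn' : ℝ → ℝ}
    (h : EqOn fn fn' (Icc a b)) : errE a b n p fn = errE a b n p fn' := by
  unfold errE
  congr 1
  refine integral_congr fun x hx => ?_
  rw [uIcc_of_le zero_le_one] at hx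
  have hmem : a + (b - a) * x ∈ Icc a b := ⟨by nlinarith [hx.1], by nlinarith [hx.2]⟩
  simp only [h hmem]

theorem integral_comp_sub_div_sub {a b : ℝ} (hab : a ≠ b) (f : ℝ → ℝ) :
    ∫ y in a..b, f ((y - a) / (b - a)) = (b - a) * ∫ x in (0:ℝ)..1, f x := by
  have hba : b - a ≠ 0 := sub_ne_zero.2 hab.symm
  simp_rw [sub_div]
  rw [intervalIntegral.integral_comp_div_sub f hba, sub_self, ← sub_div, div_self hba, smul_eq_mul]

noncomputable def peakDensity (p : ℝ[X]) (a b : ℝ) (k : ℕ) : ℝ[X] :=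
  C (∫ x in (0:ℝ)..1, |p.eval x| ^ (2 * k + 1))⁻¹ *
    (p.comp (C (b - a)⁻¹ * (X - C a))) ^ (2 * k + 1)

theorem eval_peakDensity (p : ℝ[X]) (a b : ℝ) (k : ℕ) (y : ℝ) :
    (peakDensity p a b k).eval y =
      (∫ x in (0:ℝ)..1, |p.eval x| ^ (2 * k + 1))⁻¹ *
        p.eval ((y - a) / (b - a)) ^ (2 * k + 1) := by
  simp [peakDensity, div_eq_inv_mul]

theorem integral_abs_eval_peakDensity {p : ℝ[X]} {a b : ℝ} (hab : a < b) {k : ℕ}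
    (hI : 0 < ∫ x in (0:ℝ)..1, |p.eval x| ^ (2 * k + 1)) :
    ∫ y in a..b, |(peakDensity p a b k).eval y| = b - a := by
  simp_rw [eval_peakDensity, abs_mul, abs_inv, abs_of_pos hI, abs_pow]
  rw [intervalIntegral.integral_const_mul,
    integral_comp_sub_div_sub hab.ne (fun x => |p.eval x| ^ (2 * k + 1))]
  field_simp

theorem abs_errE_peakDensity {p : ℝ[X]} {a b : ℝ} (hab : a < b) (n k : ℕ)
    (hI : 0 < ∫ x in (0:ℝ)..1, |p.eval x| ^ (2 * k + 1)) :
    |errE a b n (fun x => p.eval x) (fun y => (peakDensity p a b k).eval y)| =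
      (b - a) ^ (n + 1) * ((∫ x in (0:ℝ)..1, |p.eval x| ^ (2 * k + 1 + 1)) /
        ∫ x in (0:ℝ)..1, |p.eval x| ^ (2 * k + 1)) := by
  have hba : b - a ≠ 0 := (sub_pos.2 hab).ne'
  have hintegrand : ∀ x, p.eval x * (peakDensity p a b k).eval (a + (b - a) * x) =
      (∫ x in (0:ℝ)..1, |p.eval x| ^ (2 * k + 1))⁻¹ * |p.eval x| ^ (2 * k + 1 + 1) := by
    intro x
    rw [eval_peakDensity, add_sub_cancel_left, mul_div_cancel_left₀ _ hba,
      Even.pow_abs ⟨k + 1, by ring⟩]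
    ring
  rw [errE, funext hintegrand, intervalIntegral.integral_const_mul, abs_mul, abs_mul, abs_mul,
    abs_pow, abs_neg, abs_one, one_pow, one_mul, abs_pow, abs_of_pos (sub_pos.2 hab), abs_inv,
    abs_of_pos hI, abs_of_nonneg (integral_nonneg zero_le_one fun x _ => by positivity), inv_mul_eq_div]

theorem holder_bound_sharp_infty_one_general (n : ℕ) (hn : 1 ≤ n) (a b : ℝ) (hab : a < b)
    (p : Polynomial ℝ) (hdeg : p.natDegree = n) :
    ∃ F : ℕ → ℝ → ℝ,
      (∀ k, ContDiffOn ℝ (n - 1 : ℕ) (F k) (Set.Icc a b) ∧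
        ACOn (iteratedDerivWithin (n - 1) (F k) (Set.Icc a b))
          (iteratedDerivWithin n (F k) (Set.Icc a b)) a b) ∧
      (∀ k, (∫ x in a..b, |iteratedDerivWithin n (F k) (Set.Icc a b) x|) = b - a) ∧
      Tendsto
        (fun k =>
          |errE a b n (fun x => p.eval x) (iteratedDerivWithin n (F k) (Set.Icc a b))|)
        atTop
        (nhds ((b - a) ^ (n + 1) * sSup ((fun x => |p.eval x|) '' Set.Icc (0:ℝ) 1))) := by
  obtain ⟨m, rfl⟩ : ∃ m, n = m + 1 := ⟨n - 1, by omega⟩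
  have hp : p ≠ 0 := ne_zero_of_natDegree_gt (n := 0) (by omega)
  have hmoment := p.continuous.abs.intervalIntegral_pow_pos (fun _ => abs_nonneg _) zero_lt_one
    (p.sSup_abs_eval_Icc_pos hp zero_lt_one)
  choose F hF hFn using fun k =>
    exists_contDiff_iteratedDerivWithin_eq_eval (peakDensity p a b k) (m + 1) hab
  refine ⟨F, fun k => ⟨(hF k).contDiffOn.of_le (by exact_mod_cast le_top), ?_⟩, fun k => ?_, ?_⟩
  · simpa using acOn_iteratedDerivWithin_of_contDiff ((hF k).of_le (by exact_mod_cast le_top)) hab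
  · rw [integral_congr fun x hx => congrArg abs (hFn k ((uIcc_of_le hab.le).subset hx))]
    exact integral_abs_eval_peakDensity hab (hmoment _)
  · simp_rw [errE_congr hab.le _ _ (hFn _), abs_errE_peakDensity hab _ _ (hmoment _)]
    have hodd : Tendsto (fun k : ℕ => 2 * k + 1) atTop atTop :=
      tendsto_atTop_mono (fun k => show k ≤ 2 * k + 1 by omega) tendsto_id
    exact ((p.continuous.abs.tendsto_intervalIntegral_pow_succ_div (fun _ => abs_nonneg _)
      zero_lt_one (p.sSup_abs_eval_Icc_pos hp zero_lt_one)).comp hodd).const_mul _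

/-- **sharpness, `r = ∞`, `s = 1`.** For `n ≥ 1`, `a < b` and a real polynomial
`p` of degree `n` with leading coefficient `1/n!`, there is a sequence `f_k : [a,b] → ℝ`, each
with `f_k^{(n-1)}` absolutely continuous on `[a,b]` and `‖f_k^{(n)}‖_{L^1([a,b])} = b − a`,
such that `|E_{(a,b)}(p,f_k)| → (b−a)^{n+1} max_{x∈[0,1]} |p(x)|` as `k → ∞`. -/
theorem holder_bound_sharp_infty_one (n : ℕ) (hn : 1 ≤ n) (a b : ℝ) (hab : a < b)
    (p : Polynomial ℝ) (hdeg : p.natDegree = n)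
    (hlead : p.leadingCoeff = 1 / (n.factorial : ℝ)) :
    ∃ F : ℕ → ℝ → ℝ,
      (∀ k, ContDiffOn ℝ (n - 1 : ℕ) (F k) (Set.Icc a b) ∧
        ACOn (iteratedDerivWithin (n - 1) (F k) (Set.Icc a b))
          (iteratedDerivWithin n (F k) (Set.Icc a b)) a b) ∧
      (∀ k, (∫ x in a..b, |iteratedDerivWithin n (F k) (Set.Icc a b) x|) = b - a) ∧
      Tendsto
        (fun k =>
          |errE a b n (fun x => p.eval x) (iteratedDerivWithin n (F k) (Set.Icc a b))|)
        atTop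
        (nhds ((b - a) ^ (n + 1) * sSup ((fun x => |p.eval x|) '' Set.Icc (0:ℝ) 1))) :=
  holder_bound_sharp_infty_one_general n hn a b hab p hdeg
end

section
/- For every even integer n ≥ 2, ∫_0^1 |B_n(x) − B_n| dx = |B_n|; equivalently, ‖q_n‖_1 = |B_n|/n!. -/
open MeasureTheory intervalIntegral

/-- The `n`-th Bernoulli number `B_n = B_n(0)`, as a real number. -/
noncomputable def bernNum (n : ℕ) : ℝ := (bernoulli n : ℝ)

/-!
Every odd Bernoulli polynomial `B_{2m+1}` has at most one zero in `(0, 1)`: for `m = 0` this is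
`B_1(x) = x - 1/2`, and two zeros `a < b` of `B_{2m+3}` in `(0, 1)`, together with its zeros at
`0` and `1`, would by Rolle's theorem applied twice give two zeros of `B_{2m+1}` in `(0, 1)`.
Consequently, for even `n ≥ 2`, `B_n(x) - B_n` does not vanish on `(0, 1)`: a zero `c` would, with
`B_n(0) = B_n(1) = B_n`, give zeros of `B_{n-1}` in `(0, c)` and in `(c, 1)`. So `B_n(x) - B_n` has
constant sign on `[0, 1]`, and its `L¹` norm is the absolute value of its integral, which is
`-B_n` because `B_n` has mean zero.
-/

open Set

theorem nonneg_or_nonpos_of_ne_zero_on_Ioo {f : ℝ → ℝ} {a b : ℝ}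
    (hf : ContinuousOn f (Icc a b)) (hne : ∀ x ∈ Ioo a b, f x ≠ 0) :
    (∀ x ∈ Icc a b, 0 ≤ f x) ∨ ∀ x ∈ Icc a b, f x ≤ 0 := by
  by_contra! ⟨⟨p, hp, hfp⟩, q, hq, hfq⟩
  rcases le_total p q with hpq | hqp
  · obtain ⟨c, hc, hfc⟩ :=
      intermediate_value_Ioo hpq (hf.mono (Icc_subset_Icc hp.1 hq.2)) ⟨hfp, hfq⟩
    exact hne c ⟨hp.1.trans_lt hc.1, hc.2.trans_le hq.2⟩ hfc
  · obtain ⟨c, hc, hfc⟩ :=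
      intermediate_value_Ioo' hqp (hf.mono (Icc_subset_Icc hq.1 hp.2)) ⟨hfp, hfq⟩
    exact hne c ⟨hq.1.trans_lt hc.1, hc.2.trans_le hp.2⟩ hfc

theorem integral_abs_eq_abs_integral_of_nonneg_or_nonpos {f : ℝ → ℝ} {a b : ℝ} {μ : Measure ℝ}
    (hab : a ≤ b) (hsign : (∀ x ∈ Icc a b, 0 ≤ f x) ∨ ∀ x ∈ Icc a b, f x ≤ 0) :
    ∫ x in a..b, |f x| ∂μ = |∫ x in a..b, f x ∂μ| := by
  have huIcc : uIcc a b = Icc a b := uIcc_of_le hab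
  rcases hsign with hpos | hneg
  · rw [abs_of_nonneg (integral_nonneg hab hpos)]
    exact integral_congr fun x hx => abs_of_nonneg (hpos x (huIcc ▸ hx))
  · rw [← abs_neg, ← intervalIntegral.integral_neg,
      abs_of_nonneg (integral_nonneg hab fun x hx => neg_nonneg.2 (hneg x hx))]
    exact integral_congr fun x hx => abs_of_nonpos (hneg x (huIcc ▸ hx))

theorem continuous_bernPoly (n : ℕ) : Continuous (bernPoly n) :=
  (Polynomial.bernoulli n).continuous_aeval

theorem hasDerivAt_bernPoly (n : ℕ) (x : ℝ) :
    HasDerivAt (bernPoly (n + 1)) ((n + 1) * bernPoly n x) x := by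
  have h := (Polynomial.bernoulli (n + 1)).hasDerivAt_aeval x
  simp only [Polynomial.derivative_bernoulli_add_one, map_mul, map_add, map_natCast, map_one] at h
  exact h

theorem bernPoly_ratCast (n : ℕ) (q : ℚ) :
    bernPoly n q = ((Polynomial.bernoulli n).eval q : ℚ) :=
  Polynomial.aeval_algebraMap_apply_eq_algebraMap_eval q _

theorem bernPoly_apply_zero (n : ℕ) : bernPoly n 0 = bernNum n := by
  simpa [bernNum] using bernPoly_ratCast n 0

theorem bernPoly_apply_one {n : ℕ} (hn : n ≠ 1) : bernPoly n 1 = bernNum n := by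
  simpa [bernNum, bernoulli_eq_bernoulli'_of_ne_one hn] using bernPoly_ratCast n 1

theorem bernNum_eq_zero_of_odd {n : ℕ} (hodd : Odd n) (hn : 1 < n) : bernNum n = 0 := by
  simp [bernNum, bernoulli_eq_zero_of_odd hodd hn]

theorem bernPoly_one_apply (x : ℝ) : bernPoly 1 x = x - 1 / 2 := by
  simp [bernPoly, Polynomial.bernoulli_one]

theorem exists_bernPoly_eq_zero_of_eq (k : ℕ) {a b : ℝ} (hab : a < b)
    (h : bernPoly (k + 1) a = bernPoly (k + 1) b) : ∃ c ∈ Ioo a b, bernPoly k c = 0 := by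
  obtain ⟨c, hc, hc0⟩ := exists_hasDerivAt_eq_zero hab (continuous_bernPoly _).continuousOn h
    fun x _ => hasDerivAt_bernPoly k x
  exact ⟨c, hc, (mul_eq_zero.1 hc0).resolve_left (by positivity)⟩

theorem bernPoly_odd_ne_zero_of_lt (m : ℕ) {a b : ℝ} (ha : 0 < a) (hab : a < b) (hb : b < 1)
    (hza : bernPoly (2 * m + 1) a = 0) : bernPoly (2 * m + 1) b ≠ 0 := by
  induction m generalizing a b with
  | zero =>
    simp only [Nat.mul_zero, Nat.zero_add, bernPoly_one_apply] at hza ⊢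
    linarith
  | succ m ih =>
    intro hzb
    have hodd : Odd (2 * (m + 1) + 1) := odd_two_mul_add_one _
    have hz0 : bernPoly (2 * m + 2 + 1) 0 = 0 := by
      rw [bernPoly_apply_zero]; exact bernNum_eq_zero_of_odd hodd (by omega)
    have hz1 : bernPoly (2 * m + 2 + 1) 1 = 0 := by
      rw [bernPoly_apply_one (by omega)]; exact bernNum_eq_zero_of_odd hodd (by omega)
    obtain ⟨u, hu, hzu⟩ := exists_bernPoly_eq_zero_of_eq _ ha (hz0.trans hza.symm)
    obtain ⟨v, hv, hzv⟩ := exists_bernPoly_eq_zero_of_eq _ hab (hza.trans hzb.symm)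
    obtain ⟨w, hw, hzw⟩ := exists_bernPoly_eq_zero_of_eq _ hb (hzb.trans hz1.symm)
    obtain ⟨p, hp, hzp⟩ := exists_bernPoly_eq_zero_of_eq _ (hu.2.trans hv.1) (hzu.trans hzv.symm)
    obtain ⟨q, hq, hzq⟩ := exists_bernPoly_eq_zero_of_eq _ (hv.2.trans hw.1) (hzv.trans hzw.symm)
    exact ih (hu.1.trans hp.1) (hp.2.trans hq.1) (hq.2.trans hw.2) hzp hzq

theorem bernPoly_even_ne_bernNum (m : ℕ) {x : ℝ} (hx : x ∈ Ioo 0 1) :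
    bernPoly (2 * m + 2) x ≠ bernNum (2 * m + 2) := by
  intro hzx
  obtain ⟨u, hu, hzu⟩ := exists_bernPoly_eq_zero_of_eq (2 * m + 1) hx.1
    ((bernPoly_apply_zero _).trans hzx.symm)
  obtain ⟨v, hv, hzv⟩ := exists_bernPoly_eq_zero_of_eq (2 * m + 1) hx.2
    (hzx.trans (bernPoly_apply_one (by omega)).symm)
  exact bernPoly_odd_ne_zero_of_lt m hu.1 (hu.2.trans hv.1) hv.2 hzu hzv

theorem integral_bernPoly {n : ℕ} (hn : n ≠ 0) : ∫ x in (0 : ℝ)..1, bernPoly n x = 0 := by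
  have hderiv (x : ℝ) : HasDerivAt (fun y => bernPoly (n + 1) y / (n + 1)) (bernPoly n x) x := by
    simpa [mul_div_cancel_left₀ _ (n.cast_add_one_ne_zero : (n : ℝ) + 1 ≠ 0)] using
      (hasDerivAt_bernPoly n x).div_const ((n : ℝ) + 1)
  rw [integral_eq_sub_of_hasDerivAt (fun x _ => hderiv x)
    ((continuous_bernPoly n).intervalIntegrable 0 1), bernPoly_apply_one (by omega),
    bernPoly_apply_zero, sub_self]

/-- For every even `n ≥ 2`, `∫_0^1 |B_n(x) − B_n| dx = |B_n|`;
equivalently, `‖q_n‖_1 = |B_n|/n!` where `q_n(x) = (B_n(x) − B_n)/n!`. -/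
theorem L1_norm_qB_even (n : ℕ) (hn : 2 ≤ n) (heven : Even n) :
    (∫ x in (0:ℝ)..1, |bernPoly n x - bernNum n|) = |bernNum n| ∧
      (∫ x in (0:ℝ)..1, |(bernPoly n x - bernNum n) / (n.factorial : ℝ)|) =
        |bernNum n| / (n.factorial : ℝ) := by
  obtain ⟨m, rfl⟩ : ∃ m, n = 2 * m + 2 := ⟨n / 2 - 1, by obtain ⟨k, rfl⟩ := heven; omega⟩
  have hcont : Continuous fun x => bernPoly (2 * m + 2) x - bernNum (2 * m + 2) :=
    (continuous_bernPoly _).sub continuous_const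
  have hsign := nonneg_or_nonpos_of_ne_zero_on_Ioo hcont.continuousOn
    fun x hx => sub_ne_zero.2 (bernPoly_even_ne_bernNum m hx)
  have hL1 : ∫ x in (0:ℝ)..1, |bernPoly (2 * m + 2) x - bernNum (2 * m + 2)| =
      |bernNum (2 * m + 2)| := by
    rw [integral_abs_eq_abs_integral_of_nonneg_or_nonpos zero_le_one hsign,
      intervalIntegral.integral_sub ((continuous_bernPoly _).intervalIntegrable 0 1)
        intervalIntegrable_const, integral_bernPoly (by omega)]
    simp
  refine ⟨hL1, ?_⟩
  simp only [abs_div, Nat.abs_cast, intervalIntegral.integral_div, hL1]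
end

section
/- For every odd integer n ≥ 1, ∫_0^1 |B_n(x)| dx = (2^{n+1} − 1) |B_{n+1}| / (2^{n-1} (n+1)); equivalently, ‖p_n‖_1 = (2^{n+1} − 1) |B_{n+1}| / (2^{n-1} (n+1) · n!). -/
open MeasureTheory intervalIntegral

/-!
For odd `n` the reflection `B_n(1 - x) = -B_n(x)` gives `∫_0^1 |B_n| = 2 ∫_0^{1/2} |B_n|`.
On `(0, 1/2)` the polynomial `B_{2k+1}` has the constant sign `(-1)^(k+1)`: inductively,
`(-1)^(k+2) B_{2k+3}` has second derivative a negative multiple of `(-1)^(k+1) B_{2k+1}`, so it is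
strictly concave on `[0, 1/2]`, and it vanishes at both endpoints. Hence
`∫_0^{1/2} |B_n| = |B_{n+1}(1/2) - B_{n+1}(0)| / (n + 1)`,
and `B_{n+1}(1/2) = (2^{-n} - 1) B_{n+1}`.
-/

open Set

theorem bernPoly_eq_bernoulliFun : bernPoly = bernoulliFun := by
  ext n x
  rw [bernPoly, bernoulliFun, Polynomial.eval_map_algebraMap]

theorem intervalIntegral.integral_abs_eq_abs_integral_of_nonneg {f : ℝ → ℝ} {a b : ℝ}
    (hab : a ≤ b) (hf : ∀ x ∈ Ioo a b, 0 ≤ f x) :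
    ∫ x in a..b, |f x| = |∫ x in a..b, f x| := by
  simp only [integral_of_le hab, integral_Ioc_eq_integral_Ioo]
  rw [setIntegral_congr_fun measurableSet_Ioo fun x hx ↦ abs_of_nonneg (hf x hx),
    abs_of_nonneg (setIntegral_nonneg measurableSet_Ioo hf)]

theorem intervalIntegral.integral_eq_two_mul_integral_of_symm {g : ℝ → ℝ} {a b : ℝ}
    (hg : ∀ x, g (a + b - x) = g x) (hint : IntervalIntegrable g volume a b) :
    ∫ x in a..b, g x = 2 * ∫ x in a..(a + b) / 2, g x := by
  have hmid : (a + b) / 2 ∈ uIcc a b := by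
    rcases le_total a b with h | h
    · rw [uIcc_of_le h]; constructor <;> linarith
    · rw [uIcc_of_ge h]; constructor <;> linarith
  have h₁ := hint.mono_set (uIcc_subset_uIcc left_mem_uIcc hmid)
  have h₂ := hint.mono_set (uIcc_subset_uIcc hmid right_mem_uIcc)
  have hreflect : ∫ x in (a + b) / 2..b, g x = ∫ x in a..(a + b) / 2, g x := by
    conv_lhs => arg 1; ext x; rw [← hg]
    rw [integral_comp_sub_left fun x ↦ g x]
    congr 1 <;> ring
  rw [← integral_add_adjacent_intervals h₁ h₂, hreflect, two_mul]

theorem deriv2_bernoulliFun (n : ℕ) (x : ℝ) :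
    deriv^[2] (bernoulliFun (n + 2)) x = (n + 2) * (n + 1) * bernoulliFun n x := by
  simp only [Function.iterate_succ, Function.iterate_zero, Function.comp_apply, id,
    deriv_bernoulliFun, deriv_const_mul_field']
  rw [show n + 2 - 1 - 1 = n by omega, show n + 2 - 1 = n + 1 by omega]
  push_cast
  ring

theorem StrictConcaveOn.pos_of_endpoints_eq_zero {f : ℝ → ℝ} {a b x : ℝ}
    (hf : StrictConcaveOn ℝ (Icc a b) f) (ha : f a = 0) (hb : f b = 0) (hx : x ∈ Ioo a b) :
    0 < f x := by
  have hab : a < b := hx.1.trans hx.2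
  simpa [ha, hb] using hf.lt_on_openSegment (left_mem_Icc.2 hab.le) (right_mem_Icc.2 hab.le)
    hab.ne (by rwa [openSegment_eq_Ioo hab])

theorem bernoulliFun_odd_sign (k : ℕ) {x : ℝ} (hx : x ∈ Ioo 0 2⁻¹) :
    0 < (-1) ^ (k + 1) * bernoulliFun (2 * k + 1) x := by
  induction k generalizing x with
  | zero => norm_num; linarith [hx.2]
  | succ k ih =>
    have hconcave : StrictConcaveOn ℝ (Icc 0 2⁻¹)
        fun y ↦ (-1) ^ (k + 2) * bernoulliFun (2 * k + 3) y := by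
      refine strictConcaveOn_of_deriv2_neg (convex_Icc _ _) (by fun_prop) fun y hy ↦ ?_
      rw [interior_Icc] at hy
      rw [← iteratedDeriv_eq_iterate, iteratedDeriv_const_mul_field, iteratedDeriv_eq_iterate,
        deriv2_bernoulliFun]
      have hflip : ∀ c : ℝ, (-1) ^ (k + 2) * (c * bernoulliFun (2 * k + 1) y) =
          -(c * ((-1) ^ (k + 1) * bernoulliFun (2 * k + 1) y)) := fun c ↦ by ring
      rw [hflip, neg_neg_iff_pos]
      exact mul_pos (by positivity) (ih hy)
    have hodd : bernoulli (2 * k + 3) = 0 :=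
      bernoulli_eq_zero_of_odd ⟨k + 1, by ring⟩ (by omega)
    refine hconcave.pos_of_endpoints_eq_zero ?_ ?_ hx
    · simp [bernoulliFun_eval_zero, hodd]
    · simp [show 2 * k + 3 = 2 * (k + 1) + 1 by ring, bernoulliFun_eval_half_eq_zero]

theorem integral_bernoulliFun_zero_half (n : ℕ) :
    ∫ x in (0 : ℝ)..2⁻¹, bernoulliFun n x =
      (2 / 2 ^ (n + 1) - 2) * bernoulli (n + 1) / (n + 1) := by
  rw [integral_eq_sub_of_hasDerivAt (fun x _ ↦ antideriv_bernoulliFun n x)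
    (intervalIntegrable_bernoulliFun n _ _), bernoulliFun_eval_half, bernoulliFun_eval_zero]
  ring

theorem integral_abs_bernoulliFun_of_odd {n : ℕ} (hn : Odd n) :
    ∫ x in (0 : ℝ)..1, |bernoulliFun n x| =
      ((2 : ℝ) ^ (n + 1) - 1) * |(bernoulli (n + 1) : ℝ)| /
        ((2 : ℝ) ^ (n - 1) * (n + 1)) := by
  obtain ⟨k, rfl⟩ := hn
  have hsymm (x : ℝ) : |bernoulliFun (2 * k + 1) (0 + 1 - x)| = |bernoulliFun (2 * k + 1) x| := by
    simp [bernoulliFun_eval_one_sub, abs_mul]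
  have hsign : ∫ x in (0 : ℝ)..2⁻¹, |bernoulliFun (2 * k + 1) x| =
      |∫ x in (0 : ℝ)..2⁻¹, bernoulliFun (2 * k + 1) x| := by
    simpa [abs_mul] using integral_abs_eq_abs_integral_of_nonneg (by norm_num)
      fun x hx ↦ (bernoulliFun_odd_sign k hx).le
  have hcoeff : |(2 : ℝ) / 2 ^ (2 * k + 1 + 1) - 2| = 2 - 2 / 2 ^ (2 * k + 1 + 1) := by
    rw [abs_sub_comm,
      abs_of_nonneg (sub_nonneg.2 (div_le_self zero_le_two (one_le_pow₀ one_le_two)))]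
  rw [integral_eq_two_mul_integral_of_symm hsymm
      ((continuous_bernoulliFun _).abs.intervalIntegrable _ _),
    show ((0 : ℝ) + 1) / 2 = 2⁻¹ by norm_num, hsign, integral_bernoulliFun_zero_half, abs_div,
    abs_mul, hcoeff, abs_of_pos (by positivity : (0 : ℝ) < (2 * k + 1 : ℕ) + 1)]
  rw [show 2 * k + 1 - 1 = 2 * k by omega, pow_succ, pow_succ]
  field_simp

theorem L1_norm_pB_odd_general (n : ℕ) (hodd : Odd n) :
    (∫ x in (0:ℝ)..1, |bernPoly n x|) =
        ((2:ℝ) ^ (n + 1) - 1) * |bernNum (n + 1)| / ((2:ℝ) ^ (n - 1) * (n + 1)) ∧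
      (∫ x in (0:ℝ)..1, |bernPoly n x / (n.factorial : ℝ)|) =
        ((2:ℝ) ^ (n + 1) - 1) * |bernNum (n + 1)| /
          ((2:ℝ) ^ (n - 1) * (n + 1) * (n.factorial : ℝ)) := by
  have h := integral_abs_bernoulliFun_of_odd hodd
  simp only [bernPoly_eq_bernoulliFun, bernNum]
  refine ⟨h, ?_⟩
  simp_rw [abs_div, Nat.abs_cast, intervalIntegral.integral_div, h, div_div]

/-- For every odd `n ≥ 1`,
`∫_0^1 |B_n(x)| dx = (2^{n+1} − 1)|B_{n+1}| / (2^{n-1}(n+1))`; equivalently,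
`‖p_n‖_1 = (2^{n+1} − 1)|B_{n+1}| / (2^{n-1}(n+1)·n!)` where `p_n(x) = B_n(x)/n!`. -/
theorem L1_norm_pB_odd (n : ℕ) (hn : 1 ≤ n) (hodd : Odd n) :
    (∫ x in (0:ℝ)..1, |bernPoly n x|) =
        ((2:ℝ) ^ (n + 1) - 1) * |bernNum (n + 1)| / ((2:ℝ) ^ (n - 1) * (n + 1)) ∧
      (∫ x in (0:ℝ)..1, |bernPoly n x / (n.factorial : ℝ)|) =
        ((2:ℝ) ^ (n + 1) - 1) * |bernNum (n + 1)| /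
          ((2:ℝ) ^ (n - 1) * (n + 1) * (n.factorial : ℝ)) :=
  L1_norm_pB_odd_general n hodd
end

section
/- As n → ∞, ‖p_n‖_∞ ∼ 2/(2π)^n; that is, lim_{n→∞} (2π)^n · max_{x∈[0,1]} |B_n(x)| / n! = 2. -/
/-!
For `n ≥ 2` the Fourier expansion of `B_n` on `[0, 1]` reads
`±(2π)ⁿ / (2 n!) · B_n(x) = ∑_{j ≥ 1} j⁻ⁿ cos(2πjx)` for even `n` and the same with `sin` for odd
`n`. Such a series is within `ζ(n) - 1` of its first term, which has modulus at most `1`, with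
equality at `x = 0` (resp. `x = 1/4`). So `(2π)ⁿ / (2 n!) · ‖B_n‖_∞` is within `ζ(n) - 1` of `1`,
and `ζ(n) → 1`.
-/

open Filter Real

/-- The sup norm `‖g‖_∞ = max_{x∈[0,1]} |g(x)|`. -/
noncomputable def normInf (g : ℝ → ℝ) : ℝ :=
  sSup ((fun x => |g x|) '' Set.Icc (0:ℝ) 1)

open Set Topology

/-- `ζ(n) - 1 = ∑_{j ≥ 2} j⁻ⁿ`. -/
noncomputable def zetaTail (n : ℕ) : ℝ := ∑' k : ℕ, 1 / ((k + 2 : ℕ) : ℝ) ^ n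

lemma summable_zetaTail {n : ℕ} (hn : 2 ≤ n) :
    Summable fun k : ℕ => 1 / ((k + 2 : ℕ) : ℝ) ^ n :=
  (summable_nat_add_iff 2).2 (Real.summable_one_div_nat_pow.2 hn)

lemma tendsto_zetaTail : Tendsto zetaTail atTop (𝓝 0) := by
  have hlim (k : ℕ) : Tendsto (fun n : ℕ => 1 / ((k + 2 : ℕ) : ℝ) ^ n) atTop (𝓝 0) := by
    simp_rw [one_div, ← inv_pow]
    exact tendsto_pow_atTop_nhds_zero_of_lt_one (by positivity)
      (inv_lt_one_of_one_lt₀ (by norm_cast; omega))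
  have hdom := tendsto_tsum_of_dominated_convergence (summable_zetaTail le_rfl) hlim <|
    (eventually_ge_atTop 2).mono fun n hn k => by
      rw [Real.norm_of_nonneg (by positivity)]
      exact one_div_pow_le_one_div_pow_of_le (by norm_cast; omega) hn
  rw [tsum_zero] at hdom
  exact hdom

lemma abs_sub_le_zetaTail {n : ℕ} (hn : 2 ≤ n) {f : ℕ → ℝ} (hf : ∀ j, |f j| ≤ 1) {S : ℝ}
    (hS : HasSum (fun j : ℕ => 1 / (j : ℝ) ^ n * f j) S) : |S - f 1| ≤ zetaTail n := by
  have htail := (hasSum_nat_add_iff' 2).2 hS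
  simp only [Finset.sum_range_succ, Finset.sum_range_zero, Nat.cast_zero, Nat.cast_one,
    zero_pow (by omega : n ≠ 0), div_zero, zero_mul, one_pow, div_one, one_mul, zero_add] at htail
  refine htail.norm_le_of_bounded (summable_zetaTail hn).hasSum fun j => ?_
  rw [Real.norm_eq_abs, abs_mul, abs_of_nonneg (by positivity)]
  exact mul_le_of_le_one_right (by positivity) (hf _)

lemma normInf_const_mul (c : ℝ) (g : ℝ → ℝ) :
    normInf (fun x => c * g x) = |c| * normInf g := by
  simp only [normInf, abs_mul]
  rw [← smul_eq_mul, ← Real.sSup_smul_of_nonneg (abs_nonneg c), ← Set.image_smul, Set.image_image]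
  rfl

lemma abs_normInf_sub_le {h : ℝ → ℝ} {M ε : ℝ} (hle : ∀ x ∈ Icc (0 : ℝ) 1, |h x| ≤ M + ε)
    (hge : ∃ x ∈ Icc (0 : ℝ) 1, M - ε ≤ |h x|) : |normInf h - M| ≤ ε := by
  have hbdd : BddAbove ((fun x => |h x|) '' Icc (0 : ℝ) 1) :=
    ⟨M + ε, forall_mem_image.2 hle⟩
  obtain ⟨x₀, hx₀, hM⟩ := hge
  unfold normInf
  rw [abs_sub_le_iff]
  constructor
  · linarith [csSup_le (Nonempty.image _ (nonempty_Icc.2 zero_le_one)) (forall_mem_image.2 hle)]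
  · linarith [le_csSup hbdd (mem_image_of_mem _ hx₀)]

lemma abs_mul_normInf_sub_one_le {n : ℕ} (hn : 2 ≤ n) {φ : ℕ → ℝ → ℝ} (hφ : ∀ j x, |φ j x| ≤ 1)
    {x₀ : ℝ} (hx₀ : x₀ ∈ Icc (0 : ℝ) 1) (hφx₀ : φ 1 x₀ = 1) {c : ℝ} {g : ℝ → ℝ}
    (hg : ∀ x ∈ Icc (0 : ℝ) 1, HasSum (fun j : ℕ => 1 / (j : ℝ) ^ n * φ j x) (c * g x)) :
    |(|c| * normInf g) - 1| ≤ zetaTail n := by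
  have hclose (x) (hx : x ∈ Icc (0 : ℝ) 1) : |c * g x - φ 1 x| ≤ zetaTail n :=
    abs_sub_le_zetaTail hn (hφ · x) (hg x hx)
  rw [← normInf_const_mul]
  refine abs_normInf_sub_le (fun x hx => ?_) ⟨x₀, hx₀, ?_⟩
  · linarith [hclose x hx, abs_sub_abs_le_abs_sub (c * g x) (φ 1 x), hφ 1 x]
  · have h₀ := hclose x₀ hx₀
    rw [hφx₀, abs_sub_comm] at h₀
    linarith [abs_sub_abs_le_abs_sub 1 (c * g x₀), abs_one (α := ℝ)]

lemma abs_neg_one_pow_mul (k : ℕ) {a : ℝ} (ha : 0 ≤ a) : |(-1) ^ k * a| = a := by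
  simp [abs_of_nonneg ha]

lemma abs_mul_normInf_bernPoly_sub_one_le {n : ℕ} (hn : 2 ≤ n) :
    |(2 * π) ^ n / 2 / n.factorial * normInf (bernPoly n) - 1| ≤ zetaTail n := by
  obtain ⟨k, rfl | rfl⟩ := Nat.even_or_odd' n
  · have h := abs_mul_normInf_sub_one_le hn (fun j x => abs_cos_le_one (2 * π * j * x))
      (left_mem_Icc.2 zero_le_one) (by simp) (g := bernPoly (2 * k))
      fun x hx => by
        simpa only [bernPoly, Polynomial.eval_map_algebraMap, mul_div_assoc]
          using hasSum_one_div_nat_pow_mul_cos (by omega) hx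
    rwa [abs_neg_one_pow_mul _ (by positivity)] at h
  · have h := abs_mul_normInf_sub_one_le hn (fun j x => abs_sin_le_one (2 * π * j * x))
      (x₀ := 1 / 4) (by norm_num) (by convert sin_pi_div_two using 2; push_cast; ring)
      (g := bernPoly (2 * k + 1))
      fun x hx => by
        simpa only [bernPoly, Polynomial.eval_map_algebraMap, mul_div_assoc]
          using hasSum_one_div_nat_pow_mul_sin (by omega) hx
    rwa [abs_neg_one_pow_mul _ (by positivity)] at h

/-- `‖p_n‖_∞ ∼ 2/(2π)^n` as `n → ∞`; that is,
`lim_{n→∞} (2π)^n · max_{x∈[0,1]} |B_n(x)| / n! = 2`. -/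
theorem sup_norm_pB_asymptotics :
    Tendsto
      (fun n : ℕ =>
        (2 * π) ^ n * normInf (fun x => bernPoly n x) / (n.factorial : ℝ))
      atTop (nhds 2) := by
  have hlim : Tendsto (fun n : ℕ => (2 * π) ^ n / 2 / n.factorial * normInf (bernPoly n))
      atTop (𝓝 1) := by
    rw [tendsto_iff_norm_sub_tendsto_zero]
    exact squeeze_zero' (Eventually.of_forall fun _ => norm_nonneg _)
      ((eventually_ge_atTop 2).mono fun n hn => abs_mul_normInf_bernPoly_sub_one_le hn)
      tendsto_zetaTail
  convert hlim.const_mul 2 using 1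
  · ext n
    field_simp
  · norm_num
end
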